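/- arXiv:1804.02907 — 4 statements merged into one kernel-verified Lean document; each statement's English description precedes it below -/
import Mathlib

section
/- Let C ⊆ 𝕊^{n-1} be a spherically convex set that is open in the induced topology of 𝕊^{n-1}, and let f : C → ℝ be the restriction of a differentiable function defined on an open subset of ℝⁿ containing C, with usual gradient Df. Then f is spherically quasi-convex if and only if for all x, y ∈ C: f(x) ≤ f(y) implies ⟨Df(y), x⟩ − ⟨x, y⟩·⟨Df(y), y⟩ ≤ 0. -/
open scoped InnerProductSpace

/-- The (constant-speed) parametrization on `[0,1]` of the minimal geodesic segment of the
unit sphere joining `x` to a non-antipodal point `y`, namely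
`t ↦ (cos(t·d(x,y)) - ⟪x,y⟫ sin(t·d(x,y))/√(1-⟪x,y⟫²)) • x + (sin(t·d(x,y))/√(1-⟪x,y⟫²)) • y`,
where `d(x,y) = arccos ⟪x,y⟫` is the intrinsic distance on the sphere. -/
noncomputable def geoSeg {n : ℕ} (x y : EuclideanSpace ℝ (Fin n)) (t : ℝ) :
    EuclideanSpace ℝ (Fin n) :=
  (Real.cos (t * Real.arccos ⟪x, y⟫_ℝ) -
      ⟪x, y⟫_ℝ * Real.sin (t * Real.arccos ⟪x, y⟫_ℝ) / Real.sqrt (1 - ⟪x, y⟫_ℝ ^ 2)) • x +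
    (Real.sin (t * Real.arccos ⟪x, y⟫_ℝ) / Real.sqrt (1 - ⟪x, y⟫_ℝ ^ 2)) • y

/-- `γ`, parametrized (with constant speed) on `[0,1]`, is a minimal geodesic segment of the
unit sphere joining `x` to `y`.  For `y ≠ -x` it is the unique such segment `geoSeg x y`
(which is constantly `x` when `y = x`); for `y = -x` it is
`t ↦ cos(tπ) • x + sin(tπ) • v` for some unit vector `v` orthogonal to `x`. -/
def IsMinGeodesic {n : ℕ} (γ : ℝ → EuclideanSpace ℝ (Fin n))
    (x y : EuclideanSpace ℝ (Fin n)) : Prop :=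
  ‖x‖ = 1 ∧ ‖y‖ = 1 ∧
    ((y ≠ -x ∧ γ = geoSeg x y) ∨
      (y = -x ∧ ∃ v : EuclideanSpace ℝ (Fin n), ‖v‖ = 1 ∧ ⟪x, v⟫_ℝ = 0 ∧
        γ = fun t => Real.cos (t * Real.pi) • x + Real.sin (t * Real.pi) • v))

/-- A subset of the unit sphere is spherically convex if it contains every minimal geodesic
segment joining any two of its points. -/
def SphericallyConvex {n : ℕ} (C : Set (EuclideanSpace ℝ (Fin n))) : Prop :=
  ∀ x ∈ C, ∀ y ∈ C, ∀ γ : ℝ → EuclideanSpace ℝ (Fin n),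
    IsMinGeodesic γ x y → ∀ t ∈ Set.Icc (0 : ℝ) 1, γ t ∈ C

/-- `f` is spherically quasi-convex on `C`: along every minimal geodesic segment lying in `C`,
the composition with `f` is quasi-convex, i.e. `f(γ t) ≤ max (f(γ t₁)) (f(γ t₂))` for all
`t ∈ [t₁, t₂]`. -/
def SphQuasiConvexOn {n : ℕ} (C : Set (EuclideanSpace ℝ (Fin n)))
    (f : EuclideanSpace ℝ (Fin n) → ℝ) : Prop :=
  ∀ x ∈ C, ∀ y ∈ C, ∀ γ : ℝ → EuclideanSpace ℝ (Fin n),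
    IsMinGeodesic γ x y → (∀ t ∈ Set.Icc (0 : ℝ) 1, γ t ∈ C) →
    ∀ t₁ t t₂ : ℝ, 0 ≤ t₁ → t₁ ≤ t → t ≤ t₂ → t₂ ≤ 1 →
      f (γ t) ≤ max (f (γ t₁)) (f (γ t₂))

open Real Set Filter Topology

set_option linter.unusedSectionVars false
set_option linter.unusedVariables false

section Aux
variable {E : Type*} [NormedAddCommGroup E] [InnerProductSpace ℝ E] [CompleteSpace E]

lemma trig_key (θ u v X W : ℝ) :
    Real.cos (u*θ) * X + Real.sin (u*θ) * W
      - (Real.cos (u*θ) * Real.cos (v*θ) + Real.sin (u*θ) * Real.sin (v*θ))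
        * (Real.cos (v*θ) * X + Real.sin (v*θ) * W)
    = Real.sin ((v-u)*θ) * (Real.sin (v*θ) * X - Real.cos (v*θ) * W) := by
  have h := Real.sin_sq_add_cos_sq (v*θ)
  rw [show (v-u)*θ = v*θ - u*θ by ring, Real.sin_sub]
  linear_combination (-(Real.cos (u*θ)*X + Real.sin (u*θ)*W)) * h

lemma deriv_nonneg_of_max_right (g : ℝ → ℝ) {m : ℝ} (h : HasDerivAt g m 1)
    (hle : ∀ t ∈ Icc (0:ℝ) 1, g t ≤ g 1) : 0 ≤ m := by
  have hs : Tendsto (slope g 1) (𝓝[<] (1:ℝ)) (𝓝 m) :=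
    (hasDerivAt_iff_tendsto_slope.mp h).mono_left
      (nhdsWithin_mono _ fun t ht => ne_of_lt ht)
  refine ge_of_tendsto hs ?_
  filter_upwards [Ioo_mem_nhdsLT_of_mem (by constructor <;> norm_num : (1:ℝ) ∈ Ioc 0 1)]
    with t ht
  have h1 : g t - g 1 ≤ 0 := sub_nonpos.2 (hle t ⟨ht.1.le, ht.2.le⟩)
  have h2 : t - 1 < 0 := sub_neg.2 ht.2
  have := div_nonneg (neg_nonneg.2 h1) (neg_nonneg.2 h2.le)
  rw [neg_div_neg_eq] at this
  rwa [slope_def_field]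

lemma quasi_of_deriv (g g' : ℝ → ℝ) (t₁ t t₂ : ℝ) (h01 : 0 ≤ t₁) (h1 : t₁ ≤ t)
    (h2 : t ≤ t₂) (h21 : t₂ ≤ 1)
    (hc : ContinuousOn g (Icc 0 1))
    (hd : ∀ s ∈ Ioo (0:ℝ) 1, HasDerivAt g (g' s) s)
    (key1 : ∀ u v, 0 ≤ u → v ∈ Ioo (0:ℝ) 1 → u < v → g u ≤ g v → 0 ≤ g' v)
    (key2 : ∀ u v, u ≤ 1 → v ∈ Ioo (0:ℝ) 1 → v < u → g u ≤ g v → g' v ≤ 0) :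
    g t ≤ max (g t₁) (g t₂) := by
  by_contra hcon
  push_neg at hcon
  have hlt1 : g t₁ < g t := (le_max_left _ _).trans_lt hcon
  have hlt2 : g t₂ < g t := (le_max_right _ _).trans_lt hcon
  have ht1 : t₁ < t := h1.lt_of_ne (by rintro rfl; exact absurd hlt1 (lt_irrefl _))
  have ht2 : t < t₂ := h2.lt_of_ne (by rintro rfl; exact absurd hlt2 (lt_irrefl _))
  obtain ⟨w, hw, hw'⟩ := exists_hasDerivAt_eq_slope g g' ht1
    (hc.mono (Icc_subset_Icc h01 (h2.trans h21)))
    (fun s hs => hd s ⟨h01.trans_lt hs.1, hs.2.trans_le (h2.trans h21)⟩)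
  obtain ⟨v, hv, hv'⟩ := exists_hasDerivAt_eq_slope g g' ht2
    (hc.mono (Icc_subset_Icc (h01.trans h1) h21))
    (fun s hs => hd s ⟨(h01.trans h1).trans_lt hs.1, hs.2.trans_le h21⟩)
  have hwio : w ∈ Ioo (0:ℝ) 1 := ⟨h01.trans_lt hw.1, hw.2.trans_le (h2.trans h21)⟩
  have hvio : v ∈ Ioo (0:ℝ) 1 := ⟨(h01.trans h1).trans_lt hv.1, hv.2.trans_le h21⟩
  have hgw : 0 < g' w := by
    rw [hw']; exact div_pos (sub_pos.2 hlt1) (sub_pos.2 ht1)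
  have hgv : g' v < 0 := by
    rw [hv']; exact div_neg_of_neg_of_pos (sub_neg.2 hlt2) (sub_pos.2 ht2)
  have hwv : w < v := hw.2.trans hv.1
  have hgvw : g w < g v := by
    by_contra hle'
    push_neg at hle'
    exact absurd (key2 v w hvio.2.le hwio hwv hle') (not_le.2 hgw)
  exact absurd (key1 w v hwio.1.le hvio hwv hgvw.le) (not_le.2 hgv)

lemma gamma_hasDerivAt (x w : E) (θ t : ℝ) :
    HasDerivAt (fun s : ℝ => Real.cos (s*θ) • x + Real.sin (s*θ) • w)
      ((-Real.sin (t*θ) * θ) • x + (Real.cos (t*θ) * θ) • w) t := by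
  have h1 : HasDerivAt (fun s : ℝ => s * θ) θ t := by simpa using (hasDerivAt_id t).mul_const θ
  have hc : HasDerivAt (fun s : ℝ => Real.cos (s*θ)) (-Real.sin (t*θ) * θ) t :=
    h1.cos
  have hs : HasDerivAt (fun s : ℝ => Real.sin (s*θ)) (Real.cos (t*θ) * θ) t :=
    h1.sin
  exact (hc.smul_const x).add (hs.smul_const w)

lemma inner_gamma (x w : E) (hx : ‖x‖ = 1) (hw : ‖w‖ = 1) (hxw : ⟪x,w⟫_ℝ = 0)
    (a b c d : ℝ) : ⟪a•x + b•w, c•x + d•w⟫_ℝ = a*c + b*d := by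
  have hxx : ⟪x,x⟫_ℝ = 1 := by
    rw [real_inner_self_eq_norm_sq, hx]; norm_num
  have hww : ⟪w,w⟫_ℝ = 1 := by
    rw [real_inner_self_eq_norm_sq, hw]; norm_num
  have hwx : ⟪w,x⟫_ℝ = 0 := by rw [real_inner_comm]; exact hxw
  simp [inner_add_add_self, inner_add_left, inner_add_right, inner_smul_left,
    inner_smul_right, hxx, hww, hxw, hwx, hx, hw]
  ring

/-- The workhorse: sufficiency of the first-order condition along one unified geodesic. -/
lemma unified_quasi (D : Set E) (hD : IsOpen D) (f : E → ℝ) (Df : E → E)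
    (hdiff : ∀ y ∈ D, HasGradientAt f (Df y) y)
    (x w : E) (hx : ‖x‖ = 1) (hw : ‖w‖ = 1) (hxw : ⟪x,w⟫_ℝ = 0)
    (θ : ℝ) (hθ0 : 0 < θ) (hθπ : θ ≤ π)
    (γ : ℝ → E) (hγ : γ = fun t => Real.cos (t*θ) • x + Real.sin (t*θ) • w)
    (hγD : ∀ t ∈ Icc (0:ℝ) 1, γ t ∈ D)
    (hyp : ∀ u ∈ Icc (0:ℝ) 1, ∀ v ∈ Icc (0:ℝ) 1, f (γ u) ≤ f (γ v) →
      ⟪Df (γ v), γ u⟫_ℝ - ⟪γ u, γ v⟫_ℝ * ⟪Df (γ v), γ v⟫_ℝ ≤ 0)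
    (t₁ t t₂ : ℝ) (h01 : 0 ≤ t₁) (h1 : t₁ ≤ t) (h2 : t ≤ t₂) (h21 : t₂ ≤ 1) :
    f (γ t) ≤ max (f (γ t₁)) (f (γ t₂)) := by
  subst hγ
  set γ : ℝ → E := fun t => Real.cos (t*θ) • x + Real.sin (t*θ) • w with hγdef
  set g : ℝ → ℝ := fun s => f (γ s) with hgdef
  set g' : ℝ → ℝ := fun s =>
    (-Real.sin (s*θ) * θ) * ⟪Df (γ s), x⟫_ℝ + (Real.cos (s*θ) * θ) * ⟪Df (γ s), w⟫_ℝ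
    with hg'def
  have hder : ∀ s ∈ Icc (0:ℝ) 1, HasDerivAt g (g' s) s := by
    intro s hs
    have hfd := (hdiff (γ s) (hγD s hs)).hasFDerivAt
    have hgd := gamma_hasDerivAt x w θ s
    have := hfd.comp_hasDerivAt s hgd
    simp [g', InnerProductSpace.toDual_apply_apply, inner_add_right, real_inner_smul_right]
      at this ⊢
    exact this
  have hcont : ContinuousOn g (Icc 0 1) :=
    fun s hs => ((hder s hs).continuousAt).continuousWithinAt
  -- key sign computation
  have hT : ∀ u v : ℝ, 0 ≤ u → u ≤ 1 → 0 ≤ v → v ≤ 1 → f (γ u) ≤ f (γ v) →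
      Real.sin ((v-u)*θ) *
        (Real.sin (v*θ) * ⟪Df (γ v), x⟫_ℝ - Real.cos (v*θ) * ⟪Df (γ v), w⟫_ℝ) ≤ 0 := by
    intro u v hu0 hu1 hv0 hv1 hf
    have h := hyp u ⟨hu0, hu1⟩ v ⟨hv0, hv1⟩ hf
    rw [show γ u = Real.cos (u*θ) • x + Real.sin (u*θ) • w from rfl,
        show γ v = Real.cos (v*θ) • x + Real.sin (v*θ) • w from rfl] at h
    rw [inner_gamma x w hx hw hxw] at h
    rw [inner_add_right, inner_add_right, real_inner_smul_right, real_inner_smul_right,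
        real_inner_smul_right, real_inner_smul_right] at h
    calc Real.sin ((v-u)*θ) *
        (Real.sin (v*θ) * ⟪Df (γ v), x⟫_ℝ - Real.cos (v*θ) * ⟪Df (γ v), w⟫_ℝ)
        = Real.cos (u*θ) * ⟪Df (γ v), x⟫_ℝ + Real.sin (u*θ) * ⟪Df (γ v), w⟫_ℝ
          - (Real.cos (u*θ) * Real.cos (v*θ) + Real.sin (u*θ) * Real.sin (v*θ))
            * (Real.cos (v*θ) * ⟪Df (γ v), x⟫_ℝ + Real.sin (v*θ) * ⟪Df (γ v), w⟫_ℝ) :=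
          (trig_key θ u v _ _).symm
      _ ≤ 0 := by convert h using 2 <;> ring
  have key1 : ∀ u v, 0 ≤ u → v ∈ Ioo (0:ℝ) 1 → u < v → g u ≤ g v → 0 ≤ g' v := by
    intro u v hu0 hv huv hf
    have hvu : 0 < v - u := by linarith
    have hsin : 0 < Real.sin ((v-u)*θ) := by
      apply Real.sin_pos_of_pos_of_lt_pi
      · positivity
      · have h1 : v - u < 1 := by linarith [hv.2]
        calc (v-u)*θ < 1*θ := mul_lt_mul_of_pos_right h1 hθ0
          _ = θ := one_mul θ
          _ ≤ π := hθπ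
    have hTT := hT u v hu0 (by linarith [hv.2]) hv.1.le hv.2.le hf
    have hS : Real.sin (v*θ) * ⟪Df (γ v), x⟫_ℝ - Real.cos (v*θ) * ⟪Df (γ v), w⟫_ℝ ≤ 0 := by
      by_contra h'
      push_neg at h'
      nlinarith [mul_pos hsin h']
    show 0 ≤ -Real.sin (v*θ) * θ * ⟪Df (γ v), x⟫_ℝ + Real.cos (v*θ) * θ * ⟪Df (γ v), w⟫_ℝ
    nlinarith [mul_nonneg hθ0.le (neg_nonneg.2 hS)]
  have key2 : ∀ u v, u ≤ 1 → v ∈ Ioo (0:ℝ) 1 → v < u → g u ≤ g v → g' v ≤ 0 := by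
    intro u v hu1 hv huv hf
    have hsin : Real.sin ((v-u)*θ) < 0 := by
      have : Real.sin (-((v-u)*θ)) > 0 := by
        rw [show -((v-u)*θ) = (u-v)*θ by ring]
        have huv' : 0 < u - v := by linarith
        apply Real.sin_pos_of_pos_of_lt_pi
        · positivity
        · have h1 : u - v < 1 := by linarith [hv.1]
          calc (u-v)*θ < 1*θ := mul_lt_mul_of_pos_right h1 hθ0
            _ = θ := one_mul θ
            _ ≤ π := hθπ
      rw [Real.sin_neg] at this
      linarith
    have hTT := hT u v (by linarith [hv.1]) hu1 hv.1.le hv.2.le hf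
    have hS : 0 ≤ Real.sin (v*θ) * ⟪Df (γ v), x⟫_ℝ - Real.cos (v*θ) * ⟪Df (γ v), w⟫_ℝ := by
      by_contra h'
      push_neg at h'
      nlinarith [mul_pos (neg_pos.2 hsin) (neg_pos.2 h')]
    show -Real.sin (v*θ) * θ * ⟪Df (γ v), x⟫_ℝ + Real.cos (v*θ) * θ * ⟪Df (γ v), w⟫_ℝ ≤ 0
    nlinarith [mul_nonneg hθ0.le hS]
  exact quasi_of_deriv g g' t₁ t t₂ h01 h1 h2 h21 hcont
    (fun s hs => hder s ⟨hs.1.le, hs.2.le⟩) key1 key2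

end Aux


lemma geoSeg_unified {n : ℕ} (x y : EuclideanSpace ℝ (Fin n)) (hx : ‖x‖ = 1) (hy : ‖y‖ = 1)
    (hxy : x ≠ y) (hyx : y ≠ -x) :
    ∃ w : EuclideanSpace ℝ (Fin n), ‖w‖ = 1 ∧ ⟪x, w⟫_ℝ = 0 ∧
      0 < Real.arccos ⟪x, y⟫_ℝ ∧ Real.arccos ⟪x, y⟫_ℝ ≤ π ∧
      geoSeg x y = (fun t => Real.cos (t * Real.arccos ⟪x, y⟫_ℝ) • x +
        Real.sin (t * Real.arccos ⟪x, y⟫_ℝ) • w) ∧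
      Real.cos (Real.arccos ⟪x, y⟫_ℝ) • x + Real.sin (Real.arccos ⟪x, y⟫_ℝ) • w = y := by
  have habs : |⟪x, y⟫_ℝ| ≤ 1 := by
    have := abs_real_inner_le_norm x y
    rwa [hx, hy, one_mul] at this
  set c := ⟪x, y⟫_ℝ with hc
  have h1 : c ≤ 1 := (abs_le.1 habs).2
  have h2 : -1 ≤ c := (abs_le.1 habs).1
  have hc1 : c < 1 :=
    lt_of_le_of_ne h1 (fun h => hxy ((inner_eq_one_iff_of_norm_eq_one hx hy).1 h))
  have hc2 : -1 < c := by
    rcases eq_or_lt_of_le h2 with h | h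
    · exfalso
      have hxny : ⟪x, -y⟫_ℝ = 1 := by rw [inner_neg_right, ← hc, ← h]; norm_num
      have hxe : x = -y := (inner_eq_one_iff_of_norm_eq_one hx (by rwa [norm_neg])).1 hxny
      exact hyx (by rw [hxe]; simp)
    · exact h
  set s := Real.sqrt (1 - c^2) with hsdef
  have hs : 0 < s := Real.sqrt_pos.2 (by nlinarith)
  have hcos : Real.cos (Real.arccos c) = c := Real.cos_arccos h2 h1
  have hsin : Real.sin (Real.arccos c) = s := by rw [Real.sin_arccos]
  have hθ0 : 0 < Real.arccos c := Real.arccos_pos.2 hc1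
  have hθπ : Real.arccos c ≤ π := Real.arccos_le_pi c
  have hxx : ⟪x, x⟫_ℝ = 1 := by rw [real_inner_self_eq_norm_sq, hx]; norm_num
  have hyy : ⟪y, y⟫_ℝ = 1 := by rw [real_inner_self_eq_norm_sq, hy]; norm_num
  have hyx' : ⟪y, x⟫_ℝ = c := by rw [real_inner_comm]
  have hnormsub : ‖y - c • x‖ = s := by
    have hsq : ⟪y - c • x, y - c • x⟫_ℝ = 1 - c^2 := by
      simp only [real_inner_sub_sub_self, real_inner_smul_right, real_inner_smul_left,
        hyy, hxx, hyx']
      ring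
    rw [norm_eq_sqrt_real_inner, hsq]
  refine ⟨s⁻¹ • (y - c • x), ?_, ?_, hθ0, hθπ, ?_, ?_⟩
  · rw [norm_smul, hnormsub, Real.norm_eq_abs, abs_inv, abs_of_pos hs,
      inv_mul_cancel₀ hs.ne']
  · rw [real_inner_smul_right, inner_sub_right, real_inner_smul_right, hxx, ← hc]
    ring
  · funext t
    show (Real.cos (t * Real.arccos c) -
        c * Real.sin (t * Real.arccos c) / Real.sqrt (1 - c ^ 2)) • x +
      (Real.sin (t * Real.arccos c) / Real.sqrt (1 - c ^ 2)) • y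
      = Real.cos (t * Real.arccos c) • x +
        Real.sin (t * Real.arccos c) • (s⁻¹ • (y - c • x))
    rw [← hsdef, smul_smul, smul_sub, smul_smul]
    rw [div_eq_mul_inv, div_eq_mul_inv]
    module
  · rw [hcos, hsin, smul_smul, mul_inv_cancel₀ hs.ne', one_smul]
    abel


/-- First-order characterization of differentiable spherically quasi-convex functions:
if `C ⊆ 𝕊^{n-1}` is a spherically convex set, open in the induced topology of the sphere,
and `f` is differentiable on an open set `D ⊇ C` with (usual) gradient `Df`, then `f` is
spherically quasi-convex on `C` iff for all `x, y ∈ C`,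
`f x ≤ f y → ⟪Df y, x⟫ - ⟪x, y⟫ ⟪Df y, y⟫ ≤ 0`. -/
theorem sph_quasiconvex_iff_first_order {n : ℕ}
    (C D : Set (EuclideanSpace ℝ (Fin n))) (hCsub : C ⊆ Metric.sphere 0 1)
    (hCne : C.Nonempty) (hCproper : C ≠ Metric.sphere 0 1)
    (hCconv : SphericallyConvex C)
    (hCopen : ∃ U : Set (EuclideanSpace ℝ (Fin n)), IsOpen U ∧ C = U ∩ Metric.sphere 0 1)
    (hD : IsOpen D) (hCD : C ⊆ D)
    (f : EuclideanSpace ℝ (Fin n) → ℝ) (Df : EuclideanSpace ℝ (Fin n) → EuclideanSpace ℝ (Fin n))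
    (hdiff : ∀ y ∈ D, HasGradientAt f (Df y) y) :
    SphQuasiConvexOn C f ↔
      ∀ x ∈ C, ∀ y ∈ C, f x ≤ f y → ⟪Df y, x⟫_ℝ - ⟪x, y⟫_ℝ * ⟪Df y, y⟫_ℝ ≤ 0 := by
  constructor
  · -- necessity
    intro hq x hx y hy hfxy
    have hnx : ‖x‖ = 1 := by simpa using mem_sphere_zero_iff_norm.1 (hCsub hx)
    have hny : ‖y‖ = 1 := by simpa using mem_sphere_zero_iff_norm.1 (hCsub hy)
    have hyy : ⟪y, y⟫_ℝ = 1 := by rw [real_inner_self_eq_norm_sq, hny]; norm_num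
    have hxx : ⟪x, x⟫_ℝ = 1 := by rw [real_inner_self_eq_norm_sq, hnx]; norm_num
    by_cases hxy : x = y
    · subst hxy
      rw [hyy]; linarith
    by_cases hyx : y = -x
    · subst hyx
      rw [inner_neg_right, inner_neg_right, hxx]
      linarith
    obtain ⟨w, hw, hxw, hθ0, hθπ, hγeq, hend⟩ := geoSeg_unified x y hnx hny hxy hyx
    set θ := Real.arccos ⟪x, y⟫_ℝ with hθdef
    set β : ℝ → EuclideanSpace ℝ (Fin n) :=
      fun t => Real.cos (t * θ) • x + Real.sin (t * θ) • w with hβdef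
    have hβ0 : β 0 = x := by simp [hβdef]
    have hβ1 : β 1 = y := by
      show Real.cos (1 * θ) • x + Real.sin (1 * θ) • w = y
      rw [one_mul]; exact hend
    have hgeo : IsMinGeodesic (geoSeg x y) x y := ⟨hnx, hny, Or.inl ⟨hyx, rfl⟩⟩
    have hmem : ∀ t ∈ Set.Icc (0:ℝ) 1, geoSeg x y t ∈ C := hCconv x hx y hy _ hgeo
    have habs : |⟪x, y⟫_ℝ| ≤ 1 := by
      have := abs_real_inner_le_norm x y
      rwa [hnx, hny, one_mul] at this
    have hcβ : ⟪x, y⟫_ℝ = Real.cos θ :=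
      (Real.cos_arccos (abs_le.1 habs).1 (abs_le.1 habs).2).symm
    have hle : ∀ t ∈ Set.Icc (0:ℝ) 1, f (β t) ≤ f (β 1) := by
      intro t ht
      have h' := hq x hx y hy (geoSeg x y) hgeo hmem 0 t 1 le_rfl ht.1 ht.2 le_rfl
      rw [hγeq] at h'
      have h'' : f (β t) ≤ max (f (β 0)) (f (β 1)) := h'
      rw [hβ0, hβ1, max_eq_right hfxy] at h''
      rw [hβ1]
      exact h''
    -- derivative at 1
    have hfd' : HasFDerivAt f ((InnerProductSpace.toDual ℝ _) (Df y)) (β 1) := by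
      rw [hβ1]; exact (hdiff y (hCD hy)).hasFDerivAt
    have hgd := gamma_hasDerivAt x w θ 1
    have hcomp := hfd'.comp_hasDerivAt 1 hgd
    have heq : ((InnerProductSpace.toDual ℝ (EuclideanSpace ℝ (Fin n))) (Df y))
        ((-Real.sin (1*θ) * θ) • x + (Real.cos (1*θ) * θ) • w)
        = -Real.sin (1*θ) * θ * ⟪Df y, x⟫_ℝ + Real.cos (1*θ) * θ * ⟪Df y, w⟫_ℝ := by
      rw [InnerProductSpace.toDual_apply_apply, inner_add_right, real_inner_smul_right,
        real_inner_smul_right]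
    rw [heq] at hcomp
    have hder : HasDerivAt (fun t => f (β t))
        (-Real.sin (1*θ) * θ * ⟪Df y, x⟫_ℝ + Real.cos (1*θ) * θ * ⟪Df y, w⟫_ℝ) 1 := hcomp
    have hm := deriv_nonneg_of_max_right (fun t => f (β t)) hder hle
    rw [one_mul] at hm
    set X := ⟪Df y, x⟫_ℝ with hXdef
    set W := ⟪Df y, w⟫_ℝ with hWdef
    have hsinθ : 0 < Real.sin θ := by
      apply Real.sin_pos_of_pos_of_lt_pi hθ0
      rcases lt_or_eq_of_le hθπ with h | h
      · exact h
      · exfalso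
        have hcm : ⟪x, y⟫_ℝ = -1 := by rw [hcβ, h, Real.cos_pi]
        have hone : ⟪x, -y⟫_ℝ = 1 := by rw [inner_neg_right, hcm]; norm_num
        have hxe := (inner_eq_one_iff_of_norm_eq_one hnx (by rwa [norm_neg])).1 hone
        exact hyx (by rw [hxe]; simp)
    have hDfyy : ⟪Df y, y⟫_ℝ = Real.cos θ * X + Real.sin θ * W := by
      nth_rewrite 2 [← hend]
      rw [inner_add_right, real_inner_smul_right, real_inner_smul_right]
    rw [hcβ, hDfyy]
    have hS : Real.sin θ * X - Real.cos θ * W ≤ 0 := by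
      by_contra h'
      push_neg at h'
      nlinarith [mul_pos hθ0 h']
    have hpy := Real.sin_sq_add_cos_sq θ
    have hfact : X - Real.cos θ * (Real.cos θ * X + Real.sin θ * W)
        = Real.sin θ * (Real.sin θ * X - Real.cos θ * W) := by
      linear_combination (-X) * hpy
    rw [hfact]
    nlinarith [mul_nonneg hsinθ.le (neg_nonneg.2 hS)]
  · -- sufficiency
    intro hyp x hx y hy γ hgeo hmem t₁ t t₂ h01 h1 h2 h21
    obtain ⟨hnx, hny, hcase⟩ := hgeo
    have hkey : ∀ u ∈ Set.Icc (0:ℝ) 1, ∀ v ∈ Set.Icc (0:ℝ) 1, f (γ u) ≤ f (γ v) →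
        ⟪Df (γ v), γ u⟫_ℝ - ⟪γ u, γ v⟫_ℝ * ⟪Df (γ v), γ v⟫_ℝ ≤ 0 :=
      fun u hu v hv h => hyp (γ u) (hmem u hu) (γ v) (hmem v hv) h
    have hγD : ∀ s ∈ Set.Icc (0:ℝ) 1, γ s ∈ D := fun s hs => hCD (hmem s hs)
    rcases hcase with ⟨hyx, hγeq⟩ | ⟨hyeq, v, hv, hxv, hγeq⟩
    · by_cases hxy : x = y
      · -- constant geodesic
        subst hxy
        have hxx : ⟪x, x⟫_ℝ = 1 := by rw [real_inner_self_eq_norm_sq, hnx]; norm_num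
        have hconst : ∀ s, γ s = x := by
          intro s
          rw [hγeq]
          show (Real.cos (s * Real.arccos ⟪x, x⟫_ℝ) -
              ⟪x, x⟫_ℝ * Real.sin (s * Real.arccos ⟪x, x⟫_ℝ) / Real.sqrt (1 - ⟪x, x⟫_ℝ ^ 2)) • x +
            (Real.sin (s * Real.arccos ⟪x, x⟫_ℝ) / Real.sqrt (1 - ⟪x, x⟫_ℝ ^ 2)) • x = x
          rw [hxx]
          simp
        rw [hconst t, hconst t₁, hconst t₂]
        simp
      · obtain ⟨w, hw, hxw, hθ0, hθπ, hγeq2, _⟩ := geoSeg_unified x y hnx hny hxy hyx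
        exact unified_quasi D hD f Df hdiff x w hnx hw hxw _ hθ0 hθπ γ
          (hγeq.trans hγeq2) hγD hkey t₁ t t₂ h01 h1 h2 h21
    · exact unified_quasi D hD f Df hdiff x v hnx hv hxv π Real.pi_pos le_rfl γ
        hγeq hγD hkey t₁ t t₂ h01 h1 h2 h21
end

section
/- Let K ⊆ ℝⁿ be a proper subdual cone, C = 𝕊^{n-1} ∩ int(K), and A ∈ ℝ^{n×n} a symmetric matrix. Then the quadratic function q_A : C → ℝ, q_A(x) = ⟨Ax, x⟩, is spherically quasi-convex if and only if ⟨Ax, y⟩ ≤ ⟨x, y⟩ · max{⟨Ax, x⟩, ⟨Ay, y⟩} for all x, y ∈ 𝕊^{n-1} ∩ K. -/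
open scoped InnerProductSpace

/-- Multiplication of an `n × n` real matrix with a vector of `EuclideanSpace ℝ (Fin n)`. -/
noncomputable def mulVecE {n : ℕ} (A : Matrix (Fin n) (Fin n) ℝ)
    (x : EuclideanSpace ℝ (Fin n)) : EuclideanSpace ℝ (Fin n) :=
  WithLp.toLp 2 (fun i => ∑ j, A i j * x j)

namespace SQC
open Real Pointwise
variable {n : ℕ}
local notation "E" => EuclideanSpace ℝ (Fin n)

lemma mulVecE_comb (A : Matrix (Fin n) (Fin n) ℝ) (a b : ℝ) (x y : E) :
    mulVecE A (a • x + b • y) = a • mulVecE A x + b • mulVecE A y := by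
  ext i
  simp only [mulVecE, PiLp.add_apply, PiLp.smul_apply, smul_eq_mul, PiLp.toLp_apply]
  rw [Finset.mul_sum, Finset.mul_sum, ← Finset.sum_add_distrib]
  exact Finset.sum_congr rfl fun j _ => by ring

lemma inner_mulVecE_symm (A : Matrix (Fin n) (Fin n) ℝ) (hA : A.IsSymm) (x y : E) :
    ⟪mulVecE A x, y⟫_ℝ = ⟪mulVecE A y, x⟫_ℝ := by
  rw [real_inner_comm, real_inner_comm x]
  simp only [PiLp.inner_apply, RCLike.inner_apply, conj_trivial, mulVecE]
  calc ∑ i, (∑ j, A i j * x j) * y i = ∑ i, ∑ j, A i j * x j * y i := by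
        simp [Finset.sum_mul]
    _ = ∑ j, ∑ i, A i j * x j * y i := Finset.sum_comm
    _ = ∑ j, (∑ i, A j i * y i) * x j := by
        refine Finset.sum_congr rfl fun j _ => ?_
        rw [Finset.sum_mul]
        exact Finset.sum_congr rfl fun i _ => by rw [hA.apply]; ring

lemma q_expand (A : Matrix (Fin n) (Fin n) ℝ) (hA : A.IsSymm) (a b : ℝ) (x y : E) :
    ⟪mulVecE A (a • x + b • y), a • x + b • y⟫_ℝ =
      a ^ 2 * ⟪mulVecE A x, x⟫_ℝ + 2 * a * b * ⟪mulVecE A x, y⟫_ℝ +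
        b ^ 2 * ⟪mulVecE A y, y⟫_ℝ := by
  rw [mulVecE_comb]
  simp only [inner_add_left, inner_add_right, real_inner_smul_left, real_inner_smul_right]
  rw [inner_mulVecE_symm A hA y x]
  ring

lemma inner_expand (a b : ℝ) (x y : E) :
    ⟪a • x + b • y, a • x + b • y⟫_ℝ =
      a ^ 2 * ⟪x, x⟫_ℝ + 2 * a * b * ⟪x, y⟫_ℝ + b ^ 2 * ⟪y, y⟫_ℝ := by
  simp only [inner_add_left, inner_add_right, real_inner_smul_left, real_inner_smul_right]
  rw [real_inner_comm y x]
  ring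

lemma trig2 (a b c d : ℝ) :
    Real.sin (c - b) * Real.sin (d - a) + Real.sin (b - a) * Real.sin (d - c) =
      Real.sin (c - a) * Real.sin (d - b) := by
  simp only [Real.sin_sub]; ring

lemma trig3 (θ τ : ℝ) :
    Real.sin (θ - τ) ^ 2 + 2 * Real.cos θ * Real.sin (θ - τ) * Real.sin τ + Real.sin τ ^ 2 =
      Real.sin θ ^ 2 := by
  simp only [Real.sin_sub]
  linear_combination (Real.sin θ ^ 2) * Real.sin_sq_add_cos_sq τ -
    (Real.sin τ ^ 2) * Real.sin_sq_add_cos_sq θ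

lemma geoSeg_eq (x y : E) (hc : ⟪x, y⟫_ℝ ^ 2 < 1) (t : ℝ) :
    geoSeg x y t =
      (Real.sin ((1 - t) * Real.arccos ⟪x, y⟫_ℝ) / Real.sin (Real.arccos ⟪x, y⟫_ℝ)) • x +
        (Real.sin (t * Real.arccos ⟪x, y⟫_ℝ) / Real.sin (Real.arccos ⟪x, y⟫_ℝ)) • y := by
  set c := ⟪x, y⟫_ℝ with hcdef
  have hc1 : -1 ≤ c := by nlinarith
  have hc2 : c ≤ 1 := by nlinarith
  have hs : Real.sin (Real.arccos c) = Real.sqrt (1 - c ^ 2) := Real.sin_arccos c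
  have hcos : Real.cos (Real.arccos c) = c := Real.cos_arccos hc1 hc2
  have hspos : 0 < Real.sqrt (1 - c ^ 2) := Real.sqrt_pos.2 (by nlinarith)
  unfold geoSeg
  rw [← hcdef]
  congr 1
  · congr 1
    rw [show (1 - t) * Real.arccos c = Real.arccos c - t * Real.arccos c by ring,
      Real.sin_sub, hs, hcos]
    field_simp
  · rw [hs]

lemma geoSeg_sin_pos (c : ℝ) (hc : c ^ 2 < 1) : 0 < Real.sin (Real.arccos c) := by
  rw [Real.sin_arccos]
  exact Real.sqrt_pos.2 (by nlinarith)

lemma geoSeg_zero (x y : E) : geoSeg x y 0 = x := by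
  simp [geoSeg]

lemma geoSeg_of_inner_one (x y : E) (h : ⟪x, y⟫_ℝ = 1) (t : ℝ) : geoSeg x y t = x := by
  simp [geoSeg, h]

lemma geoSeg_one (x y : E) (hc : ⟪x, y⟫_ℝ ^ 2 < 1) : geoSeg x y 1 = y := by
  have h0 := geoSeg_sin_pos _ hc
  rw [geoSeg_eq x y hc 1, show (1:ℝ) - 1 = 0 by ring, zero_mul, Real.sin_zero, zero_div,
    zero_smul, zero_add, one_mul, div_self h0.ne', one_smul]

lemma geoSeg_inner_self (x y : E) (hx : ‖x‖ = 1) (hy : ‖y‖ = 1)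
    (hc : ⟪x, y⟫_ℝ ^ 2 < 1) (t : ℝ) : ⟪geoSeg x y t, geoSeg x y t⟫_ℝ = 1 := by
  set c := ⟪x, y⟫_ℝ with hcdef
  have hc1 : -1 ≤ c := by nlinarith
  have hc2 : c ≤ 1 := by nlinarith
  have hcos : Real.cos (Real.arccos c) = c := Real.cos_arccos hc1 hc2
  have hspos := geoSeg_sin_pos c hc
  have hxx : ⟪x, x⟫_ℝ = 1 := by rw [real_inner_self_eq_norm_sq, hx]; norm_num
  have hyy : ⟪y, y⟫_ℝ = 1 := by rw [real_inner_self_eq_norm_sq, hy]; norm_num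
  rw [geoSeg_eq x y hc t, inner_expand, hxx, hyy, ← hcdef]
  set θ := Real.arccos c
  rw [show (1 - t) * θ = θ - t * θ by ring]
  field_simp
  rw [show θ * (1 - t) = θ - t * θ by ring, show θ * t = t * θ by ring]
  linear_combination trig3 θ (t * θ) -
    2 * Real.sin (θ - t * θ) * Real.sin (t * θ) * hcos

lemma geoSeg_norm (x y : E) (hx : ‖x‖ = 1) (hy : ‖y‖ = 1)
    (hc : ⟪x, y⟫_ℝ ^ 2 < 1) (t : ℝ) : ‖geoSeg x y t‖ = 1 := by
  have h := geoSeg_inner_self x y hx hy hc t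
  rw [real_inner_self_eq_norm_sq] at h
  nlinarith [norm_nonneg (geoSeg x y t)]

lemma geoSeg_combo (x y : E) (hc : ⟪x, y⟫_ℝ ^ 2 < 1) (t₁ t t₂ : ℝ)
    (hd : Real.sin ((t₂ - t₁) * Real.arccos ⟪x, y⟫_ℝ) ≠ 0) :
    geoSeg x y t =
      (Real.sin ((t₂ - t) * Real.arccos ⟪x, y⟫_ℝ) /
          Real.sin ((t₂ - t₁) * Real.arccos ⟪x, y⟫_ℝ)) • geoSeg x y t₁ +
        (Real.sin ((t - t₁) * Real.arccos ⟪x, y⟫_ℝ) /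
          Real.sin ((t₂ - t₁) * Real.arccos ⟪x, y⟫_ℝ)) • geoSeg x y t₂ := by
  have hs := (geoSeg_sin_pos _ hc).ne'
  rw [geoSeg_eq x y hc t, geoSeg_eq x y hc t₁, geoSeg_eq x y hc t₂]
  set θ := Real.arccos ⟪x, y⟫_ℝ with hθ
  rw [sub_mul] at hd
  have h1 : Real.sin ((1 - t) * θ) / Real.sin θ =
      (Real.sin ((t₂ - t) * θ) / Real.sin ((t₂ - t₁) * θ)) *
          (Real.sin ((1 - t₁) * θ) / Real.sin θ) +
        (Real.sin ((t - t₁) * θ) / Real.sin ((t₂ - t₁) * θ)) *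
          (Real.sin ((1 - t₂) * θ) / Real.sin θ) := by
    simp only [sub_mul, one_mul]
    rw [div_mul_div_comm, div_mul_div_comm, ← add_div,
      div_eq_div_iff hs (mul_ne_zero hd hs)]
    linear_combination -Real.sin θ * trig2 (t₁ * θ) (t * θ) (t₂ * θ) θ
  have h2 : Real.sin (t * θ) / Real.sin θ =
      (Real.sin ((t₂ - t) * θ) / Real.sin ((t₂ - t₁) * θ)) *
          (Real.sin (t₁ * θ) / Real.sin θ) +
        (Real.sin ((t - t₁) * θ) / Real.sin ((t₂ - t₁) * θ)) *
          (Real.sin (t₂ * θ) / Real.sin θ) := by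
    simp only [sub_mul, one_mul]
    rw [div_mul_div_comm, div_mul_div_comm, ← add_div,
      div_eq_div_iff hs (mul_ne_zero hd hs)]
    have base := trig2 0 (t₁ * θ) (t * θ) (t₂ * θ)
    simp only [sub_zero] at base
    linear_combination -Real.sin θ * base
  rw [h1, h2]
  module

variable {K : Set (EuclideanSpace ℝ (Fin n))}

lemma smul_mem_interior (hcone : ∀ x ∈ K, ∀ t : ℝ, 0 < t → t • x ∈ K)
    {x : E} (hx : x ∈ interior K) {t : ℝ} (ht : 0 < t) : t • x ∈ interior K := by
  have hsub : t • interior K ⊆ K := by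
    rintro z ⟨w, hw, rfl⟩
    exact hcone w (interior_subset hw) t ht
  exact interior_maximal hsub (isOpen_interior.smul₀ ht.ne') (Set.smul_mem_smul_set hx)

lemma add_mem_interior (hcone : ∀ x ∈ K, ∀ t : ℝ, 0 < t → t • x ∈ K)
    (hconvex : Convex ℝ K) {a b : E} (ha : a ∈ interior K) (hb : b ∈ K) :
    a + b ∈ interior K := by
  have hsub : (fun z => z + b) '' interior K ⊆ K := by
    rintro z ⟨w, hw, rfl⟩
    have hmid : (1 / 2 : ℝ) • w + (1 / 2 : ℝ) • b ∈ K :=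
      hconvex (interior_subset hw) hb (by norm_num) (by norm_num) (by norm_num)
    have := hcone _ hmid 2 (by norm_num)
    have heq : (2 : ℝ) • ((1 / 2 : ℝ) • w + (1 / 2 : ℝ) • b) = w + b := by
      rw [smul_add, smul_smul, smul_smul]; norm_num
    rwa [heq] at this
  exact interior_maximal hsub ((isOpenMap_add_right b) _ isOpen_interior) ⟨a, ha, rfl⟩

lemma combo_mem_interior (hcone : ∀ x ∈ K, ∀ t : ℝ, 0 < t → t • x ∈ K)
    (hconvex : Convex ℝ K) {x y : E} (hx : x ∈ interior K) (hy : y ∈ interior K)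
    {l m : ℝ} (hl : 0 ≤ l) (hm : 0 ≤ m) (hlm : 0 < l + m) :
    l • x + m • y ∈ interior K := by
  rcases hl.eq_or_lt with hl0 | hl0
  · have hm0 : 0 < m := by linarith
    rw [← hl0, zero_smul, zero_add]
    exact smul_mem_interior hcone hy hm0
  · rcases hm.eq_or_lt with hm0 | hm0
    · rw [← hm0, zero_smul, add_zero]
      exact smul_mem_interior hcone hx hl0
    · exact add_mem_interior hcone hconvex (smul_mem_interior hcone hx hl0)
        (interior_subset (smul_mem_interior hcone hy hm0))

lemma eq_of_inner_one {x y : E} (hx : ‖x‖ = 1) (hy : ‖y‖ = 1) (h : ⟪x, y⟫_ℝ = 1) :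
    x = y := by
  have h2 : ‖x - y‖ ^ 2 = 0 := by rw [norm_sub_sq_real, hx, hy, h]; ring
  have := pow_eq_zero_iff (n := 2) (by norm_num) |>.1 h2
  rw [norm_eq_zero] at this
  exact sub_eq_zero.1 this

lemma neg_of_inner_neg_one {x y : E} (hx : ‖x‖ = 1) (hy : ‖y‖ = 1)
    (h : ⟪x, y⟫_ℝ = -1) : y = -x := by
  have h2 : ‖x + y‖ ^ 2 = 0 := by rw [norm_add_sq_real, hx, hy, h]; ring
  have := pow_eq_zero_iff (n := 2) (by norm_num) |>.1 h2
  rw [norm_eq_zero] at this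
  linear_combination (norm := module) this

lemma limit_aux (θ Dv Ev : ℝ) (hθs : 0 < Real.sin θ)
    (h : ∀ t ∈ Set.Ioo (0 : ℝ) 1,
      2 * Real.sin ((1 - t) * θ) * Dv ≤ Real.sin (t * θ) * Ev) : Dv ≤ 0 := by
  by_contra hD
  push_neg at hD
  set φ : ℝ → ℝ := fun t => Real.sin (t * θ) * Ev - 2 * Real.sin ((1 - t) * θ) * Dv with hφ
  have hcont : Continuous φ := by
    apply Continuous.sub
    · exact (Real.continuous_sin.comp (continuous_id.mul continuous_const)).mul continuous_const
    · exact ((continuous_const.mul (Real.continuous_sin.comp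
        ((continuous_const.sub continuous_id).mul continuous_const)))).mul continuous_const
  have hφ0 : φ 0 < 0 := by
    simp only [hφ, zero_mul, Real.sin_zero, sub_zero, one_mul]
    nlinarith
  have hev : ∀ᶠ t in nhdsWithin (0 : ℝ) (Set.Ioi 0), φ t < 0 :=
    ((hcont.tendsto 0).eventually_lt_const hφ0).filter_mono nhdsWithin_le_nhds
  have hIoo : Set.Ioo (0 : ℝ) 1 ∈ nhdsWithin (0 : ℝ) (Set.Ioi 0) :=
    Ioo_mem_nhdsGT_of_mem ⟨le_refl 0, zero_lt_one⟩
  obtain ⟨t, h1t, h2t⟩ := (hev.and hIoo).exists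
  have := h t h2t
  simp only [hφ] at h1t
  linarith

lemma norm_one_of_sphere {x : E} (hx : x ∈ Metric.sphere (0 : E) 1) : ‖x‖ = 1 := by
  simpa using hx

lemma not_neg_self (hpointed : K ∩ (-K) ⊆ {0}) {x : E} (hxn : ‖x‖ = 1)
    (hxK : x ∈ K) (hnxK : -x ∈ K) : False := by
  have : x ∈ K ∩ (-K) := ⟨hxK, by simpa using hnxK⟩
  have := hpointed this
  simp only [Set.mem_singleton_iff] at this
  rw [this] at hxn
  simp at hxn

lemma ineq_interior (hcone : ∀ x ∈ K, ∀ t : ℝ, 0 < t → t • x ∈ K)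
    (hconvex : Convex ℝ K) (hpointed : K ∩ (-K) ⊆ {0})
    (A : Matrix (Fin n) (Fin n) ℝ) (hA : A.IsSymm)
    (hQC : SphQuasiConvexOn (Metric.sphere 0 1 ∩ interior K)
      (fun x => ⟪mulVecE A x, x⟫_ℝ))
    {x y : E} (hx : x ∈ Metric.sphere (0 : E) 1 ∩ interior K)
    (hy : y ∈ Metric.sphere (0 : E) 1 ∩ interior K)
    (hle : ⟪mulVecE A y, y⟫_ℝ ≤ ⟪mulVecE A x, x⟫_ℝ) :
    ⟪mulVecE A x, y⟫_ℝ ≤ ⟪x, y⟫_ℝ * ⟪mulVecE A x, x⟫_ℝ := by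
  have hxn : ‖x‖ = 1 := norm_one_of_sphere hx.1
  have hyn : ‖y‖ = 1 := norm_one_of_sphere hy.1
  have hxx1 : ⟪x, x⟫_ℝ = 1 := by rw [real_inner_self_eq_norm_sq, hxn]; norm_num
  have hyy1 : ⟪y, y⟫_ℝ = 1 := by rw [real_inner_self_eq_norm_sq, hyn]; norm_num
  by_cases hxy : x = y
  · subst hxy; rw [hxx1, one_mul]
  set c := ⟪x, y⟫_ℝ with hcdef
  have habs : |c| ≤ 1 := by
    have := abs_real_inner_le_norm x y
    rwa [hxn, hyn, mul_one] at this
  have hc1 : -1 ≤ c := (abs_le.1 habs).1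
  have hc2 : c ≤ 1 := (abs_le.1 habs).2
  have hcne1 : c ≠ 1 := fun h => hxy (eq_of_inner_one hxn hyn h)
  have hyneg : y ≠ -x := by
    intro h
    exact not_neg_self hpointed hxn (interior_subset hx.2) (h ▸ interior_subset hy.2)
  have hcnem1 : c ≠ -1 := fun h => hyneg (neg_of_inner_neg_one hxn hyn h)
  have hc : c ^ 2 < 1 := by
    rcases hc1.lt_or_eq with h | h
    · rcases hc2.lt_or_eq with h' | h'
      · nlinarith
      · exact absurd h' hcne1
    · exact absurd h.symm hcnem1
  have hgeo : IsMinGeodesic (geoSeg x y) x y := ⟨hxn, hyn, Or.inl ⟨hyneg, rfl⟩⟩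
  set θ := Real.arccos c with hθdef
  have hspos : 0 < Real.sin θ := geoSeg_sin_pos c hc
  have hθpos : 0 < θ := Real.arccos_pos.2 (hc2.lt_of_ne hcne1)
  have hθpi : θ ≤ Real.pi := Real.arccos_le_pi c
  -- the geodesic stays in C
  have hmem : ∀ t ∈ Set.Icc (0 : ℝ) 1,
      geoSeg x y t ∈ Metric.sphere (0 : E) 1 ∩ interior K := by
    intro t ht
    have hnorm : ‖geoSeg x y t‖ = 1 := geoSeg_norm x y hxn hyn hc t
    refine ⟨by simpa using hnorm, ?_⟩
    set l := Real.sin ((1 - t) * θ) / Real.sin θ with hldef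
    set m := Real.sin (t * θ) / Real.sin θ with hmdef
    have hl : 0 ≤ l := div_nonneg
      (Real.sin_nonneg_of_nonneg_of_le_pi
        (mul_nonneg (by linarith [ht.2]) hθpos.le)
        (by nlinarith [ht.1, ht.2])) hspos.le
    have hm : 0 ≤ m := div_nonneg
      (Real.sin_nonneg_of_nonneg_of_le_pi
        (mul_nonneg ht.1 hθpos.le)
        (by nlinarith [ht.1, ht.2])) hspos.le
    have heq : geoSeg x y t = l • x + m • y := geoSeg_eq x y hc t
    have hsum : 0 < l + m := by
      by_contra hcon
      push_neg at hcon
      have hl0 : l = 0 := le_antisymm (by linarith) hl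
      have hm0 : m = 0 := le_antisymm (by linarith) hm
      rw [heq, hl0, hm0, zero_smul, zero_smul, add_zero, norm_zero] at hnorm
      norm_num at hnorm
    rw [heq]
    exact combo_mem_interior hcone hconvex hx.2 hy.2 hl hm hsum
  have key : ∀ t ∈ Set.Icc (0 : ℝ) 1,
      ⟪mulVecE A (geoSeg x y t), geoSeg x y t⟫_ℝ ≤ ⟪mulVecE A x, x⟫_ℝ := by
    intro t ht
    have := hQC x hx y hy _ hgeo hmem 0 t 1 le_rfl ht.1 ht.2 le_rfl
    simp only [geoSeg_zero, geoSeg_one x y hc] at this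
    calc ⟪mulVecE A (geoSeg x y t), geoSeg x y t⟫_ℝ
        ≤ max ⟪mulVecE A x, x⟫_ℝ ⟪mulVecE A y, y⟫_ℝ := this
      _ = ⟪mulVecE A x, x⟫_ℝ := max_eq_left hle
  -- pass to the limit
  have hD := limit_aux θ (⟪mulVecE A x, y⟫_ℝ - c * ⟪mulVecE A x, x⟫_ℝ)
    (⟪mulVecE A x, x⟫_ℝ - ⟪mulVecE A y, y⟫_ℝ) hspos ?_
  · linarith
  intro t ht
  set l := Real.sin ((1 - t) * θ) / Real.sin θ with hldef
  set m := Real.sin (t * θ) / Real.sin θ with hmdef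
  have hsl : Real.sin ((1 - t) * θ) = l * Real.sin θ :=
    (div_mul_cancel₀ _ hspos.ne').symm
  have hsm : Real.sin (t * θ) = m * Real.sin θ :=
    (div_mul_cancel₀ _ hspos.ne').symm
  have hmpos : 0 < m := by
    apply div_pos _ hspos
    apply Real.sin_pos_of_pos_of_lt_pi (mul_pos ht.1 hθpos)
    calc t * θ < 1 * θ := by nlinarith [ht.2]
      _ = θ := one_mul θ
      _ ≤ Real.pi := hθpi
  have heq : geoSeg x y t = l • x + m • y := geoSeg_eq x y hc t
  have h1 := key t ⟨ht.1.le, ht.2.le⟩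
  rw [heq, q_expand A hA] at h1
  have hunit : l ^ 2 + 2 * l * m * c + m ^ 2 = 1 := by
    have := geoSeg_inner_self x y hxn hyn hc t
    rw [heq, inner_expand, hxx1, hyy1, ← hcdef] at this
    linarith
  have hunit' : ⟪mulVecE A x, x⟫_ℝ * (l ^ 2 + 2 * l * m * c + m ^ 2)
      = ⟪mulVecE A x, x⟫_ℝ := by rw [hunit, mul_one]
  have step : 2 * l * m * (⟪mulVecE A x, y⟫_ℝ - c * ⟪mulVecE A x, x⟫_ℝ) ≤
      m ^ 2 * (⟪mulVecE A x, x⟫_ℝ - ⟪mulVecE A y, y⟫_ℝ) := by nlinarith [h1, hunit']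
  rw [hsl, hsm]
  nlinarith [mul_le_mul_of_nonneg_right step hspos.le, hmpos]

lemma mulVecE_continuous (A : Matrix (Fin n) (Fin n) ℝ) :
    Continuous (mulVecE A : E → E) := by
  let L : E →ₗ[ℝ] E :=
    { toFun := mulVecE A
      map_add' := fun u v => by
        have := mulVecE_comb A 1 1 u v
        simpa using this
      map_smul' := fun r u => by
        have := mulVecE_comb A r 0 u 0
        simpa using this }
  exact L.continuous_of_finiteDimensional

lemma ineq_of_QC (hcone : ∀ x ∈ K, ∀ t : ℝ, 0 < t → t • x ∈ K)
    (hconvex : Convex ℝ K) (hpointed : K ∩ (-K) ⊆ {0})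
    (hint : (interior K).Nonempty)
    (A : Matrix (Fin n) (Fin n) ℝ) (hA : A.IsSymm)
    (hQC : SphQuasiConvexOn (Metric.sphere 0 1 ∩ interior K)
      (fun x => ⟪mulVecE A x, x⟫_ℝ)) :
    ∀ x ∈ Metric.sphere (0 : E) 1 ∩ K, ∀ y ∈ Metric.sphere (0 : E) 1 ∩ K,
      ⟪mulVecE A x, y⟫_ℝ ≤
        ⟪x, y⟫_ℝ * max ⟪mulVecE A x, x⟫_ℝ ⟪mulVecE A y, y⟫_ℝ := by
  have hint2 : ∀ x ∈ Metric.sphere (0 : E) 1 ∩ interior K,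
      ∀ y ∈ Metric.sphere (0 : E) 1 ∩ interior K,
        ⟪mulVecE A x, y⟫_ℝ ≤
          ⟪x, y⟫_ℝ * max ⟪mulVecE A x, x⟫_ℝ ⟪mulVecE A y, y⟫_ℝ := by
    intro x hx y hy
    rcases le_total ⟪mulVecE A y, y⟫_ℝ ⟪mulVecE A x, x⟫_ℝ with h | h
    · rw [max_eq_left h]
      exact ineq_interior hcone hconvex hpointed A hA hQC hx hy h
    · rw [max_eq_right h]
      have := ineq_interior hcone hconvex hpointed A hA hQC hy hx h
      rw [inner_mulVecE_symm A hA x y, real_inner_comm y x]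
      exact this
  intro x hx y hy
  obtain ⟨e, he⟩ := hint
  have hxn : ‖x‖ = 1 := norm_one_of_sphere hx.1
  have hyn : ‖y‖ = 1 := norm_one_of_sphere hy.1
  -- approximating curves
  set u : ℝ → E := fun ε => ε • e + (1 - ε) • x with hudef
  set v : ℝ → E := fun ε => ε • e + (1 - ε) • y with hvdef
  set xh : ℝ → E := fun ε => ‖u ε‖⁻¹ • u ε with hxhdef
  set yh : ℝ → E := fun ε => ‖v ε‖⁻¹ • v ε with hyhdef
  have hucont : Continuous u := by
    exact (continuous_id.smul continuous_const).add
      ((continuous_const.sub continuous_id).smul continuous_const)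
  have hvcont : Continuous v := by
    exact (continuous_id.smul continuous_const).add
      ((continuous_const.sub continuous_id).smul continuous_const)
  have hu0 : u 0 = x := by simp [hudef]
  have hv0 : v 0 = y := by simp [hvdef]
  have hxh : Filter.Tendsto xh (nhdsWithin 0 (Set.Ioi 0)) (nhds x) := by
    have h1 : Filter.Tendsto u (nhds 0) (nhds x) := hu0 ▸ hucont.tendsto 0
    have h2 : Filter.Tendsto (fun ε => ‖u ε‖⁻¹) (nhds 0) (nhds 1) := by
      have h3 : Filter.Tendsto (fun ε => ‖u ε‖) (nhds 0) (nhds 1) := by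
        have := (continuous_norm.comp hucont).tendsto 0
        simpa [hu0, hxn, Function.comp_def] using this
      simpa using h3.inv₀ one_ne_zero
    have := h2.smul h1
    rw [one_smul] at this
    exact this.mono_left nhdsWithin_le_nhds
  have hyh : Filter.Tendsto yh (nhdsWithin 0 (Set.Ioi 0)) (nhds y) := by
    have h1 : Filter.Tendsto v (nhds 0) (nhds y) := hv0 ▸ hvcont.tendsto 0
    have h2 : Filter.Tendsto (fun ε => ‖v ε‖⁻¹) (nhds 0) (nhds 1) := by
      have h3 : Filter.Tendsto (fun ε => ‖v ε‖) (nhds 0) (nhds 1) := by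
        have := (continuous_norm.comp hvcont).tendsto 0
        simpa [hv0, hyn, Function.comp_def] using this
      simpa using h3.inv₀ one_ne_zero
    have := h2.smul h1
    rw [one_smul] at this
    exact this.mono_left nhdsWithin_le_nhds
  have hmem : ∀ z : E, ‖z‖ = 1 → z ∈ K → ∀ ε ∈ Set.Ioo (0 : ℝ) 1,
      (‖ε • e + (1 - ε) • z‖⁻¹ • (ε • e + (1 - ε) • z)) ∈
        Metric.sphere (0 : E) 1 ∩ interior K := by
    intro z hzn hzK ε hε
    set w := ε • e + (1 - ε) • z with hwdef
    have hwint : w ∈ interior K :=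
      hconvex.combo_interior_closure_mem_interior he (subset_closure hzK)
        hε.1 (by linarith [hε.2]) (by ring)
    have hwne : w ≠ 0 := by
      intro h0
      have h1 : (1 - ε) • z ∈ K := hcone z hzK _ (by linarith [hε.2])
      have h2 : -((1 - ε) • z) ∈ K := by
        have : -((1 - ε) • z) = ε • e := by
          rw [hwdef] at h0
          linear_combination (norm := module) -h0
        rw [this]
        exact hcone e (interior_subset he) ε hε.1
      have h3 : (1 - ε) • z ∈ K ∩ (-K) := ⟨h1, by simpa using h2⟩
      have h4 := hpointed h3
      simp only [Set.mem_singleton_iff, smul_eq_zero] at h4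
      rcases h4 with h4 | h4
      · linarith [hε.2, sub_eq_zero.1 h4]
      · rw [h4, norm_zero] at hzn; norm_num at hzn
    have hwpos : 0 < ‖w‖ := norm_pos_iff.2 hwne
    constructor
    · have : ‖‖w‖⁻¹ • w‖ = 1 := by
        rw [norm_smul, norm_inv, norm_norm, inv_mul_cancel₀ hwpos.ne']
      simpa using this
    · exact smul_mem_interior hcone hwint (inv_pos.2 hwpos)
  -- the quantity as a function of ε
  set Φ : ℝ → ℝ := fun ε =>
    ⟪xh ε, yh ε⟫_ℝ * max ⟪mulVecE A (xh ε), xh ε⟫_ℝ ⟪mulVecE A (yh ε), yh ε⟫_ℝ -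
      ⟪mulVecE A (xh ε), yh ε⟫_ℝ with hΦdef
  have hAx : Filter.Tendsto (fun ε => mulVecE A (xh ε)) (nhdsWithin 0 (Set.Ioi 0))
      (nhds (mulVecE A x)) := ((mulVecE_continuous A).tendsto x).comp hxh
  have hAy : Filter.Tendsto (fun ε => mulVecE A (yh ε)) (nhdsWithin 0 (Set.Ioi 0))
      (nhds (mulVecE A y)) := ((mulVecE_continuous A).tendsto y).comp hyh
  have hΦt : Filter.Tendsto Φ (nhdsWithin 0 (Set.Ioi 0))
      (nhds (⟪x, y⟫_ℝ * max ⟪mulVecE A x, x⟫_ℝ ⟪mulVecE A y, y⟫_ℝ -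
        ⟪mulVecE A x, y⟫_ℝ)) := by
    exact ((hxh.inner hyh).mul ((hAx.inner hxh).max (hAy.inner hyh))).sub (hAx.inner hyh)
  have hev : ∀ᶠ ε in nhdsWithin 0 (Set.Ioi 0), 0 ≤ Φ ε := by
    have hIoo : Set.Ioo (0 : ℝ) 1 ∈ nhdsWithin (0 : ℝ) (Set.Ioi 0) :=
      Ioo_mem_nhdsGT_of_mem ⟨le_refl 0, zero_lt_one⟩
    filter_upwards [hIoo] with ε hε
    have hx' := hmem x hxn hx.2 ε hε
    have hy' := hmem y hyn hy.2 ε hε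
    have := hint2 _ hx' _ hy'
    simp only [hΦdef, hxhdef, hyhdef]
    linarith [this]
  have := ge_of_tendsto hΦt hev
  linarith

set_option maxHeartbeats 1000000 in
lemma QC_of_ineq (hpointed : K ∩ (-K) ⊆ {0})
    (A : Matrix (Fin n) (Fin n) ℝ) (hA : A.IsSymm)
    (h : ∀ x ∈ Metric.sphere (0 : E) 1 ∩ K, ∀ y ∈ Metric.sphere (0 : E) 1 ∩ K,
      ⟪mulVecE A x, y⟫_ℝ ≤
        ⟪x, y⟫_ℝ * max ⟪mulVecE A x, x⟫_ℝ ⟪mulVecE A y, y⟫_ℝ) :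
    SphQuasiConvexOn (Metric.sphere (0 : E) 1 ∩ interior K)
      (fun x => ⟪mulVecE A x, x⟫_ℝ) := by
  intro x hx y hy γ hγ hγC t₁ t t₂ h0 h1 h2 h3
  obtain ⟨hxn, hyn, hcase⟩ := hγ
  rcases hcase with ⟨hyx, hγeq⟩ | ⟨hyx, -⟩
  swap
  · exact absurd (hyx ▸ interior_subset hy.2 : -x ∈ K)
      (fun hk => not_neg_self hpointed hxn (interior_subset hx.2) hk)
  subst hγeq
  set c := ⟪x, y⟫_ℝ with hcdef
  have habs : |c| ≤ 1 := by
    have := abs_real_inner_le_norm x y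
    rwa [hxn, hyn, mul_one] at this
  have hcl : -1 ≤ c := (abs_le.1 habs).1
  have hcu : c ≤ 1 := (abs_le.1 habs).2
  have hcnem1 : c ≠ -1 := fun hcm => hyx (neg_of_inner_neg_one hxn hyn hcm)
  by_cases hc1 : c = 1
  · simp only [geoSeg_of_inner_one x y hc1]
    exact le_max_left _ _
  have hc : c ^ 2 < 1 := by
    rcases hcl.lt_or_eq with hlt | heq
    · nlinarith [hcu.lt_of_ne hc1]
    · exact absurd heq.symm hcnem1
  by_cases ht : t₁ = t₂
  · have htt : t = t₁ := le_antisymm (by rw [ht]; exact h2) h1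
    rw [htt]
    exact le_max_left _ _
  have h12 : t₁ < t₂ := lt_of_le_of_ne (h1.trans h2) ht
  set θ := Real.arccos c with hθdef
  have hspos : 0 < Real.sin θ := geoSeg_sin_pos c hc
  have hθpos : 0 < θ := Real.arccos_pos.2 (hcu.lt_of_ne hc1)
  have hθpi : θ ≤ Real.pi := Real.arccos_le_pi c
  have hθltpi : θ < Real.pi := by
    rcases hθpi.lt_or_eq with hlt | heq
    · exact hlt
    · exact absurd (le_antisymm (Real.arccos_eq_pi.1 heq) hcl) hcnem1
  have hd : 0 < Real.sin ((t₂ - t₁) * θ) := by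
    apply Real.sin_pos_of_pos_of_lt_pi (mul_pos (by linarith) hθpos)
    calc (t₂ - t₁) * θ ≤ 1 * θ := by nlinarith
      _ = θ := one_mul θ
      _ < Real.pi := hθltpi
  set l := Real.sin ((t₂ - t) * θ) / Real.sin ((t₂ - t₁) * θ) with hldef
  set m := Real.sin ((t - t₁) * θ) / Real.sin ((t₂ - t₁) * θ) with hmdef
  have hl : 0 ≤ l := div_nonneg
    (Real.sin_nonneg_of_nonneg_of_le_pi (mul_nonneg (by linarith) hθpos.le)
      (by nlinarith)) hd.le
  have hm : 0 ≤ m := div_nonneg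
    (Real.sin_nonneg_of_nonneg_of_le_pi (mul_nonneg (by linarith) hθpos.le)
      (by nlinarith)) hd.le
  have hcombo : geoSeg x y t = l • geoSeg x y t₁ + m • geoSeg x y t₂ :=
    geoSeg_combo x y hc t₁ t t₂ hd.ne'
  set a := geoSeg x y t₁ with hadef
  set b := geoSeg x y t₂ with hbdef
  have haC := hγC t₁ ⟨h0, by linarith⟩
  have hbC := hγC t₂ ⟨by linarith, h3⟩
  have han : ‖a‖ = 1 := norm_one_of_sphere haC.1
  have hbn : ‖b‖ = 1 := norm_one_of_sphere hbC.1
  have haa1 : ⟪a, a⟫_ℝ = 1 := by rw [real_inner_self_eq_norm_sq, han]; norm_num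
  have hbb1 : ⟪b, b⟫_ℝ = 1 := by rw [real_inner_self_eq_norm_sq, hbn]; norm_num
  have hkey := h a ⟨haC.1, interior_subset haC.2⟩ b ⟨hbC.1, interior_subset hbC.2⟩
  have hpn : ‖geoSeg x y t‖ = 1 := norm_one_of_sphere (hγC t ⟨by linarith, by linarith⟩).1
  have hpp1 : ⟪geoSeg x y t, geoSeg x y t⟫_ℝ = 1 := by
    rw [real_inner_self_eq_norm_sq, hpn]; norm_num
  have hq : ⟪mulVecE A (geoSeg x y t), geoSeg x y t⟫_ℝ =
      l ^ 2 * ⟪mulVecE A a, a⟫_ℝ + 2 * l * m * ⟪mulVecE A a, b⟫_ℝ +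
        m ^ 2 * ⟪mulVecE A b, b⟫_ℝ := by
    rw [hcombo, q_expand A hA]
  have hu : l ^ 2 + 2 * l * m * ⟪a, b⟫_ℝ + m ^ 2 = 1 := by
    have := hpp1
    rw [hcombo, inner_expand, haa1, hbb1] at this
    linarith
  set M := max ⟪mulVecE A a, a⟫_ℝ ⟪mulVecE A b, b⟫_ℝ with hMdef
  have hMa : ⟪mulVecE A a, a⟫_ℝ ≤ M := le_max_left _ _
  have hMb : ⟪mulVecE A b, b⟫_ℝ ≤ M := le_max_right _ _
  have hu' : M * (l ^ 2 + 2 * l * m * ⟪a, b⟫_ℝ + m ^ 2) = M := by rw [hu, mul_one]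
  have e1 : 0 ≤ l ^ 2 * (M - ⟪mulVecE A a, a⟫_ℝ) :=
    mul_nonneg (sq_nonneg l) (sub_nonneg.2 hMa)
  have e2 : 0 ≤ m ^ 2 * (M - ⟪mulVecE A b, b⟫_ℝ) :=
    mul_nonneg (sq_nonneg m) (sub_nonneg.2 hMb)
  have e3 : 0 ≤ 2 * l * m * (⟪a, b⟫_ℝ * M - ⟪mulVecE A a, b⟫_ℝ) := by
    apply mul_nonneg (by positivity) (sub_nonneg.2 hkey)
  show ⟪mulVecE A (geoSeg x y t), geoSeg x y t⟫_ℝ ≤ M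
  rw [hq]
  nlinarith [e1, e2, e3, hu']

end SQC

/-- For a proper subdual cone `K ⊆ ℝⁿ`, `C = 𝕊^{n-1} ∩ int K` and a symmetric matrix `A`,
the quadratic function `q_A(x) = ⟪Ax, x⟫` is spherically quasi-convex on `C` if and only if
`⟪Ax, y⟫ ≤ ⟪x, y⟫ · max {⟪Ax, x⟫, ⟪Ay, y⟫}` for all `x, y ∈ 𝕊^{n-1} ∩ K`. -/
theorem quadratic_sph_quasiconvex_iff_ineq {n : ℕ} (K : Set (EuclideanSpace ℝ (Fin n)))
    (hcone : ∀ x ∈ K, ∀ t : ℝ, 0 < t → t • x ∈ K)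
    (hclosed : IsClosed K) (hconvex : Convex ℝ K)
    (hpointed : K ∩ (-K) ⊆ {0}) (hint : (interior K).Nonempty)
    (hsubdual : K ⊆ {x | ∀ y ∈ K, 0 ≤ ⟪x, y⟫_ℝ})
    (A : Matrix (Fin n) (Fin n) ℝ) (hA : A.IsSymm) :
    SphQuasiConvexOn (Metric.sphere 0 1 ∩ interior K)
        (fun x => ⟪mulVecE A x, x⟫_ℝ) ↔
      ∀ x ∈ Metric.sphere (0 : EuclideanSpace ℝ (Fin n)) 1 ∩ K,
        ∀ y ∈ Metric.sphere (0 : EuclideanSpace ℝ (Fin n)) 1 ∩ K,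
          ⟪mulVecE A x, y⟫_ℝ ≤
            ⟪x, y⟫_ℝ * max ⟪mulVecE A x, x⟫_ℝ ⟪mulVecE A y, y⟫_ℝ := by
  constructor
  · intro hQC
    exact SQC.ineq_of_QC hcone hconvex hpointed hint A hA hQC
  · intro hineq
    exact SQC.QC_of_ineq hpointed A hA hineq
end

section
/- Let K ⊆ ℝⁿ be a proper subdual cone, C = 𝕊^{n-1} ∩ int(K), and A ∈ ℝ^{n×n} a symmetric matrix. Then the quadratic function q_A : C → ℝ, q_A(x) = ⟨Ax, x⟩, is spherically quasi-convex if and only if ⟨Ax, y⟩/⟨x, y⟩ ≤ max{φ_A(x), φ_A(y)} for all x, y ∈ K with ⟨x, y⟩ ≠ 0, where φ_A(x) = ⟨Ax, x⟩/‖x‖². -/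
open scoped InnerProductSpace

/-! ### Auxiliary lemmas -/

namespace SphQC

open Real Filter
open scoped Pointwise Topology

variable {n : ℕ}

local notation "E" => EuclideanSpace ℝ (Fin n)

lemma mulVecE_apply (A : Matrix (Fin n) (Fin n) ℝ) (x : EuclideanSpace ℝ (Fin n)) (i) :
    mulVecE A x i = ∑ j, A i j * x j := rfl

lemma inner_mulVecE (A : Matrix (Fin n) (Fin n) ℝ) (x y : EuclideanSpace ℝ (Fin n)) :
    ⟪mulVecE A x, y⟫_ℝ = ∑ i, (∑ j, A i j * x j) * y i := by
  simp [PiLp.inner_apply, mulVecE_apply]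
  exact Finset.sum_congr rfl fun i _ => mul_comm _ _

lemma mulVecE_symm {A : Matrix (Fin n) (Fin n) ℝ} (hA : A.IsSymm)
    (x y : EuclideanSpace ℝ (Fin n)) : ⟪mulVecE A x, y⟫_ℝ = ⟪mulVecE A y, x⟫_ℝ := by
  rw [inner_mulVecE, inner_mulVecE]
  simp only [Finset.sum_mul]
  rw [Finset.sum_comm]
  refine Finset.sum_congr rfl fun i _ => Finset.sum_congr rfl fun j _ => ?_
  rw [hA.apply j i]; ring

lemma mulVecE_smul_add (A : Matrix (Fin n) (Fin n) ℝ) (a b : ℝ)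
    (x y : EuclideanSpace ℝ (Fin n)) :
    mulVecE A (a • x + b • y) = a • mulVecE A x + b • mulVecE A y := by
  ext i
  simp [mulVecE_apply, PiLp.add_apply, PiLp.smul_apply, smul_eq_mul, mul_add,
    Finset.sum_add_distrib, Finset.mul_sum]
  congr 1 <;> exact Finset.sum_congr rfl fun j _ => by ring

lemma mulVecE_smul (A : Matrix (Fin n) (Fin n) ℝ) (a : ℝ) (x : E) :
    mulVecE A (a • x) = a • mulVecE A x := by
  have h := mulVecE_smul_add A a 0 x 0
  simpa using h

lemma q_combo {A : Matrix (Fin n) (Fin n) ℝ} (hA : A.IsSymm) (a b : ℝ) (x y : E) :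
    ⟪mulVecE A (a • x + b • y), a • x + b • y⟫_ℝ
      = a^2 * ⟪mulVecE A x, x⟫_ℝ + 2*a*b*⟪mulVecE A x, y⟫_ℝ + b^2 * ⟪mulVecE A y, y⟫_ℝ := by
  rw [mulVecE_smul_add, inner_add_left, inner_add_right, inner_add_right,
    real_inner_smul_left, real_inner_smul_left, real_inner_smul_left, real_inner_smul_left,
    real_inner_smul_right, real_inner_smul_right, real_inner_smul_right, real_inner_smul_right,
    mulVecE_symm hA y x]
  ring

lemma coeff_norm_sq (c s u v : ℝ) (hs : s ≠ 0) (hs2 : s^2 = 1 - c^2) (hpy : v^2 + u^2 = 1) :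
    (u - c*v/s)^2 + 2*(u - c*v/s)*(v/s)*c + (v/s)^2 = 1 := by
  have h1 : (u - c*v/s)^2 + 2*(u - c*v/s)*(v/s)*c + (v/s)^2 = u^2 + v^2*(1-c^2)/s^2 := by ring
  rw [h1, ← hs2, mul_div_assoc, div_self (pow_ne_zero 2 hs)]
  linear_combination hpy

lemma inner_combo (a b : ℝ) (x y : E) (hx : ‖x‖ = 1) (hy : ‖y‖ = 1) :
    ⟪a • x + b • y, a • x + b • y⟫_ℝ = a^2 + 2*a*b*⟪x,y⟫_ℝ + b^2 := by
  have h1 : ⟪x,x⟫_ℝ = 1 := by rw [real_inner_self_eq_norm_sq x, hx]; norm_num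
  have h2 : ⟪y,y⟫_ℝ = 1 := by rw [real_inner_self_eq_norm_sq y, hy]; norm_num
  rw [inner_add_left, inner_add_right, inner_add_right, real_inner_smul_left,
    real_inner_smul_left, real_inner_smul_left, real_inner_smul_left,
    real_inner_smul_right, real_inner_smul_right, real_inner_smul_right,
    real_inner_smul_right, h1, h2, real_inner_comm y x]
  ring

lemma geoSeg_apply (x y : E) (t : ℝ) : geoSeg x y t =
    (Real.cos (t * Real.arccos ⟪x, y⟫_ℝ) -
      ⟪x, y⟫_ℝ * Real.sin (t * Real.arccos ⟪x, y⟫_ℝ) / Real.sqrt (1 - ⟪x, y⟫_ℝ ^ 2)) • x +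
    (Real.sin (t * Real.arccos ⟪x, y⟫_ℝ) / Real.sqrt (1 - ⟪x, y⟫_ℝ ^ 2)) • y := rfl

lemma geoSeg_zero (x y : E) : geoSeg x y 0 = x := by
  simp [geoSeg]

lemma geoSeg_const (x y : E) (hc : ⟪x, y⟫_ℝ = 1) (t : ℝ) : geoSeg x y t = x := by
  simp [geoSeg, hc]

lemma geoSeg_one (x y : E) (hm : -1 < ⟪x, y⟫_ℝ) (hc : ⟪x, y⟫_ℝ < 1) : geoSeg x y 1 = y := by
  have h1 : (0:ℝ) < 1 - ⟪x, y⟫_ℝ ^ 2 := by nlinarith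
  have hs : Real.sqrt (1 - ⟪x, y⟫_ℝ ^ 2) ≠ 0 := by positivity
  rw [geoSeg_apply]
  rw [one_mul, Real.cos_arccos hm.le hc.le, Real.sin_arccos]
  rw [mul_div_assoc, div_self hs]
  simp

lemma s_pos (x y : E) (hm : -1 < ⟪x, y⟫_ℝ) (hc : ⟪x, y⟫_ℝ < 1) :
    0 < Real.sqrt (1 - ⟪x, y⟫_ℝ ^ 2) := by
  apply Real.sqrt_pos.mpr; nlinarith

lemma coeff_eq (x y : E) (hm : -1 < ⟪x, y⟫_ℝ) (hc : ⟪x, y⟫_ℝ < 1) (t : ℝ) :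
    Real.cos (t * Real.arccos ⟪x, y⟫_ℝ) -
      ⟪x, y⟫_ℝ * Real.sin (t * Real.arccos ⟪x, y⟫_ℝ) / Real.sqrt (1 - ⟪x, y⟫_ℝ ^ 2)
    = Real.sin (Real.arccos ⟪x, y⟫_ℝ - t * Real.arccos ⟪x, y⟫_ℝ) /
        Real.sqrt (1 - ⟪x, y⟫_ℝ ^ 2) := by
  have hsp := s_pos x y hm hc
  rw [Real.sin_sub, Real.sin_arccos, Real.cos_arccos hm.le hc.le, eq_div_iff hsp.ne',
    sub_mul, div_mul_cancel₀ _ hsp.ne']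
  ring

lemma norm_geoSeg (x y : E) (hx : ‖x‖ = 1) (hy : ‖y‖ = 1) (hm : -1 < ⟪x, y⟫_ℝ)
    (hc : ⟪x, y⟫_ℝ < 1) (t : ℝ) : ‖geoSeg x y t‖ = 1 := by
  have hsp := s_pos x y hm hc
  have hs2 : Real.sqrt (1 - ⟪x, y⟫_ℝ ^ 2) ^ 2 = 1 - ⟪x, y⟫_ℝ ^ 2 :=
    Real.sq_sqrt (le_of_lt (by nlinarith))
  have hpy := Real.sin_sq_add_cos_sq (t * Real.arccos ⟪x, y⟫_ℝ)
  have key := coeff_norm_sq ⟪x, y⟫_ℝ (Real.sqrt (1 - ⟪x, y⟫_ℝ ^ 2))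
    (Real.cos (t * Real.arccos ⟪x, y⟫_ℝ)) (Real.sin (t * Real.arccos ⟪x, y⟫_ℝ))
    hsp.ne' hs2 hpy
  have hic := inner_combo
    (Real.cos (t * Real.arccos ⟪x, y⟫_ℝ) -
      ⟪x, y⟫_ℝ * Real.sin (t * Real.arccos ⟪x, y⟫_ℝ) / Real.sqrt (1 - ⟪x, y⟫_ℝ ^ 2))
    (Real.sin (t * Real.arccos ⟪x, y⟫_ℝ) / Real.sqrt (1 - ⟪x, y⟫_ℝ ^ 2)) x y hx hy
  rw [← geoSeg_apply] at hic
  have hinner : ⟪geoSeg x y t, geoSeg x y t⟫_ℝ = 1 := by rw [hic]; exact key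
  have hn := real_inner_self_eq_norm_sq (geoSeg x y t)
  rw [hinner] at hn
  nlinarith [norm_nonneg (geoSeg x y t)]

lemma sin_id (p q r : ℝ) :
    Real.sin (r-q) * Real.sin p + Real.sin (q-p) * Real.sin r
      = Real.sin (r-p) * Real.sin q := by
  simp [Real.sin_sub]; ring

lemma combo_coeff (X Y S1 S2 S SD s : ℝ) (hSD : SD ≠ 0) (hs : s ≠ 0)
    (hid : X*S1 + Y*S2 = SD*S) :
    (X/SD) * (S1/s) + (Y/SD)*(S2/s) = S/s := by
  field_simp
  linear_combination hid

lemma geoSeg_combo (x y : E) (hm : -1 < ⟪x, y⟫_ℝ) (hc : ⟪x, y⟫_ℝ < 1) (t₁ t t₂ : ℝ)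
    (hSD : Real.sin ((t₂ - t₁) * Real.arccos ⟪x, y⟫_ℝ) ≠ 0) :
    geoSeg x y t =
      (Real.sin ((t₂ - t) * Real.arccos ⟪x, y⟫_ℝ) /
          Real.sin ((t₂ - t₁) * Real.arccos ⟪x, y⟫_ℝ)) • geoSeg x y t₁ +
      (Real.sin ((t - t₁) * Real.arccos ⟪x, y⟫_ℝ) /
          Real.sin ((t₂ - t₁) * Real.arccos ⟪x, y⟫_ℝ)) • geoSeg x y t₂ := by
  have hsp := s_pos x y hm hc
  set c := ⟪x, y⟫_ℝ with hcdef
  set θ := Real.arccos c with hθdef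
  set s := Real.sqrt (1 - c ^ 2) with hsdef
  set SD := Real.sin ((t₂ - t₁) * θ) with hSDdef
  set α := Real.sin ((t₂ - t) * θ) / SD with hαdef
  set β := Real.sin ((t - t₁) * θ) / SD with hβdef
  have hSD' : Real.sin ((t₂ - t₁) * θ) ≠ 0 := hSD
  have eb : α * (Real.sin (t₁*θ)/s) + β * (Real.sin (t₂*θ)/s) = Real.sin (t*θ)/s := by
    have hid := sin_id (t₁*θ) (t*θ) (t₂*θ)
    rw [← sub_mul, ← sub_mul, ← sub_mul] at hid
    rw [hαdef, hβdef, hSDdef]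
    exact combo_coeff _ _ _ _ _ _ _ hSD' hsp.ne' (by linear_combination hid)
  have ea : α * (Real.cos (t₁*θ) - c * Real.sin (t₁*θ)/s)
      + β * (Real.cos (t₂*θ) - c * Real.sin (t₂*θ)/s)
      = Real.cos (t*θ) - c * Real.sin (t*θ)/s := by
    rw [coeff_eq x y hm hc t₁, coeff_eq x y hm hc t₂, coeff_eq x y hm hc t]
    have hid := sin_id (θ - t₂*θ) (θ - t*θ) (θ - t₁*θ)
    have e1 : θ - t₁*θ - (θ - t*θ) = (t - t₁)*θ := by ring
    have e2 : θ - t*θ - (θ - t₂*θ) = (t₂ - t)*θ := by ring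
    have e3 : θ - t₁*θ - (θ - t₂*θ) = (t₂ - t₁)*θ := by ring
    rw [e1, e2, e3] at hid
    rw [hαdef, hβdef, hSDdef]
    exact combo_coeff _ _ _ _ _ _ _ hSD' hsp.ne' (by linear_combination hid)
  rw [geoSeg_apply x y t, geoSeg_apply x y t₁, geoSeg_apply x y t₂]
  rw [← hcdef, ← hθdef, ← hsdef, ← ea, ← eb]
  module

/-! ### Cone lemmas -/

lemma smul_mem_interior (K : Set E) (hcone : ∀ x ∈ K, ∀ t : ℝ, 0 < t → t • x ∈ K)
    {t : ℝ} (ht : 0 < t) {z : E} (hz : z ∈ interior K) : t • z ∈ interior K := by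
  have hopen : IsOpen (t • interior K) := isOpen_interior.smul₀ (ne_of_gt ht)
  have hsub : t • interior K ⊆ K := by
    rintro - ⟨w, hw, rfl⟩
    exact hcone w (interior_subset hw) t ht
  exact interior_maximal hsub hopen ⟨z, hz, rfl⟩

lemma add_mem_interior (K : Set E) (hcone : ∀ x ∈ K, ∀ t : ℝ, 0 < t → t • x ∈ K)
    (hconvex : Convex ℝ K) {z : E} (hz : z ∈ K) {w : E} (hw : w ∈ interior K) :
    z + w ∈ interior K := by
  have hopen : IsOpen ((z + ·) '' interior K) :=
    (Homeomorph.addLeft z).isOpenMap _ isOpen_interior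
  have hsub : ((z + ·) '' interior K) ⊆ K := by
    rintro - ⟨u, hu, rfl⟩
    have hmid : (1/2 : ℝ) • z + (1/2 : ℝ) • u ∈ K :=
      hconvex hz (interior_subset hu) (by norm_num) (by norm_num) (by norm_num)
    have := hcone _ hmid 2 (by norm_num)
    simpa [smul_add, smul_smul] using this
  exact interior_maximal hsub hopen ⟨w, hw, rfl⟩

lemma inner_pos_of_interior (K : Set E)
    (hsubdual : K ⊆ {x | ∀ y ∈ K, 0 ≤ ⟪x, y⟫_ℝ})
    {x : E} (hx : x ∈ interior K) {y : E} (hy : y ∈ K) (hy0 : y ≠ 0) :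
    0 < ⟪x, y⟫_ℝ := by
  have hge : 0 ≤ ⟪x, y⟫_ℝ := hsubdual (interior_subset hx) y hy
  rcases hge.lt_or_eq with h | h
  · exact h
  exfalso
  obtain ⟨ε, hε, hball⟩ := Metric.isOpen_iff.mp isOpen_interior x hx
  set z : E := x - (ε / (2 * ‖y‖)) • y with hzdef
  have hyn : 0 < ‖y‖ := norm_pos_iff.mpr hy0
  have hδ : 0 < ε / (2 * ‖y‖) := by positivity
  have hzmem : z ∈ K := by
    apply interior_subset; apply hball
    have hzx : z - x = -((ε / (2 * ‖y‖)) • y) := by rw [hzdef, sub_sub_cancel_left]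
    have hd : dist z x = ε / 2 := by
      rw [dist_eq_norm, hzx, norm_neg, norm_smul, Real.norm_eq_abs, abs_of_pos hδ]
      field_simp
    exact Metric.mem_ball.mpr (by rw [hd]; linarith)
  have := hsubdual hzmem y hy
  rw [hzdef, inner_sub_left, real_inner_smul_left, ← h] at this
  have hyy : ⟪y,y⟫_ℝ = ‖y‖^2 := real_inner_self_eq_norm_sq y
  rw [hyy] at this
  nlinarith [mul_pos hδ (pow_pos hyn 2)]

/-! ### Misc -/

lemma eq_of_inner_one (x y : E) (hx : ‖x‖ = 1) (hy : ‖y‖ = 1) (h : ⟪x, y⟫_ℝ = 1) :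
    y = x := by
  have h1 : ⟪x,x⟫_ℝ = 1 := by rw [real_inner_self_eq_norm_sq x, hx]; norm_num
  have h2 : ⟪y,y⟫_ℝ = 1 := by rw [real_inner_self_eq_norm_sq y, hy]; norm_num
  have hcm : ⟪y,x⟫_ℝ = 1 := by rw [real_inner_comm]; exact h
  have h0 : ⟪x - y, x - y⟫_ℝ = 0 := by
    simp only [inner_sub_left, inner_sub_right, h1, h2, h, hcm]
    norm_num
  have := inner_self_eq_zero (𝕜 := ℝ).mp h0
  rw [sub_eq_zero] at this
  exact this.symm

lemma neg_of_inner_neg_one (x y : E) (hx : ‖x‖ = 1) (hy : ‖y‖ = 1) (h : ⟪x, y⟫_ℝ = -1) :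
    y = -x := by
  have h' : ⟪x, -y⟫_ℝ = 1 := by rw [inner_neg_right, h]; norm_num
  have := eq_of_inner_one x (-y) hx (by rw [norm_neg]; exact hy) h'
  rw [← this]; simp

lemma continuous_mulVecE (A : Matrix (Fin n) (Fin n) ℝ) :
    Continuous (fun x : E => mulVecE A x) := by
  have h : Continuous (fun x : E => (fun i => ∑ j, A i j * x j : Fin n → ℝ)) :=
    continuous_pi fun i => continuous_finset_sum _ fun j _ =>
      continuous_const.mul ((EuclideanSpace.proj j).continuous)
  exact (PiLp.continuous_toLp 2 (fun _ : Fin n => ℝ)).comp h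

lemma geoSeg_mem (K : Set E) (hcone : ∀ x ∈ K, ∀ t : ℝ, 0 < t → t • x ∈ K)
    (hconvex : Convex ℝ K) {x y : E}
    (hx : x ∈ Metric.sphere (0:E) 1 ∩ interior K)
    (hy : y ∈ Metric.sphere (0:E) 1 ∩ interior K)
    (hm : -1 < ⟪x, y⟫_ℝ) (hc : ⟪x, y⟫_ℝ < 1) :
    ∀ t ∈ Set.Icc (0:ℝ) 1, geoSeg x y t ∈ Metric.sphere (0:E) 1 ∩ interior K := by
  intro t ht
  have hx1 : ‖x‖ = 1 := mem_sphere_zero_iff_norm.mp hx.1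
  have hy1 : ‖y‖ = 1 := mem_sphere_zero_iff_norm.mp hy.1
  have hsp := s_pos x y hm hc
  have hθ0 : 0 < Real.arccos ⟪x, y⟫_ℝ := Real.arccos_pos.mpr hc
  have hθπ : Real.arccos ⟪x, y⟫_ℝ < Real.pi := lt_of_le_of_ne (Real.arccos_le_pi _) (fun hpi => by have := Real.arccos_eq_pi.mp hpi; linarith)
  refine ⟨mem_sphere_zero_iff_norm.mpr (norm_geoSeg x y hx1 hy1 hm hc t), ?_⟩
  have htθ1 : t * Real.arccos ⟪x, y⟫_ℝ ≤ Real.arccos ⟪x, y⟫_ℝ := by nlinarith [ht.2]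
  have htθ0 : 0 ≤ t * Real.arccos ⟪x, y⟫_ℝ := mul_nonneg ht.1 hθ0.le
  have hbn : 0 ≤ Real.sin (t * Real.arccos ⟪x, y⟫_ℝ) / Real.sqrt (1 - ⟪x, y⟫_ℝ ^ 2) :=
    div_nonneg (Real.sin_nonneg_of_nonneg_of_le_pi htθ0 (by linarith)) hsp.le
  have han : 0 ≤ Real.sin (Real.arccos ⟪x, y⟫_ℝ - t * Real.arccos ⟪x, y⟫_ℝ) /
      Real.sqrt (1 - ⟪x, y⟫_ℝ ^ 2) :=
    div_nonneg (Real.sin_nonneg_of_nonneg_of_le_pi (by linarith) (by linarith)) hsp.le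
  rw [geoSeg_apply, coeff_eq x y hm hc t]
  rcases han.eq_or_lt with ha0 | hapos
  · -- the x-coefficient vanishes; then t*θ = θ and the y-coefficient is positive
    have hsin0 : Real.sin (Real.arccos ⟪x, y⟫_ℝ - t * Real.arccos ⟪x, y⟫_ℝ) = 0 := by
      rcases div_eq_zero_iff.mp ha0.symm with h | h
      · exact h
      · exact absurd h hsp.ne'
    have hzero : Real.arccos ⟪x, y⟫_ℝ - t * Real.arccos ⟪x, y⟫_ℝ = 0 :=
      (Real.sin_eq_zero_iff_of_lt_of_lt (by linarith [Real.pi_pos]) (by linarith)).mp hsin0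
    have htθ : t * Real.arccos ⟪x, y⟫_ℝ = Real.arccos ⟪x, y⟫_ℝ := by linarith
    have hbpos : 0 < Real.sin (t * Real.arccos ⟪x, y⟫_ℝ) / Real.sqrt (1 - ⟪x, y⟫_ℝ ^ 2) := by
      rw [htθ]
      exact div_pos (Real.sin_pos_of_pos_of_lt_pi hθ0 hθπ) hsp
    rw [← ha0, zero_smul, zero_add]
    exact smul_mem_interior K hcone hbpos hy.2
  · rcases hbn.eq_or_lt with hb0 | hbpos
    · rw [← hb0, zero_smul, add_zero]
      exact smul_mem_interior K hcone hapos hx.2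
    · have h1 : (Real.sin (Real.arccos ⟪x, y⟫_ℝ - t * Real.arccos ⟪x, y⟫_ℝ) /
          Real.sqrt (1 - ⟪x, y⟫_ℝ ^ 2)) • x ∈ interior K :=
        smul_mem_interior K hcone hapos hx.2
      have h2 : (Real.sin (t * Real.arccos ⟪x, y⟫_ℝ) /
          Real.sqrt (1 - ⟪x, y⟫_ℝ ^ 2)) • y ∈ K :=
        hcone y (interior_subset hy.2) _ hbpos
      have := add_mem_interior K hcone hconvex h2 h1
      rwa [add_comm] at this

lemma stepB' (K : Set E) (hcone : ∀ x ∈ K, ∀ t : ℝ, 0 < t → t • x ∈ K)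
    (hconvex : Convex ℝ K) (hsubdual : K ⊆ {x | ∀ y ∈ K, 0 ≤ ⟪x, y⟫_ℝ})
    {A : Matrix (Fin n) (Fin n) ℝ} (hA : A.IsSymm)
    (hq : SphQuasiConvexOn (Metric.sphere (0:E) 1 ∩ interior K)
      (fun z => ⟪mulVecE A z, z⟫_ℝ))
    {x y : E} (hx : x ∈ Metric.sphere (0:E) 1 ∩ interior K)
    (hy : y ∈ Metric.sphere (0:E) 1 ∩ interior K)
    (hle : ⟪mulVecE A y, y⟫_ℝ ≤ ⟪mulVecE A x, x⟫_ℝ) :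
    ⟪mulVecE A x, y⟫_ℝ ≤ ⟪x, y⟫_ℝ * ⟪mulVecE A x, x⟫_ℝ := by
  have hx1 : ‖x‖ = 1 := mem_sphere_zero_iff_norm.mp hx.1
  have hy1 : ‖y‖ = 1 := mem_sphere_zero_iff_norm.mp hy.1
  have hy0 : y ≠ 0 := by intro h; rw [h, norm_zero] at hy1; norm_num at hy1
  have hc0 : 0 < ⟪x, y⟫_ℝ :=
    inner_pos_of_interior K hsubdual hx.2 (interior_subset hy.2) hy0
  have hcle : ⟪x, y⟫_ℝ ≤ 1 := by
    have := real_inner_le_norm x y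
    rw [hx1, hy1] at this; linarith
  rcases hcle.eq_or_lt with heq | hlt
  · -- then y = x
    have hyx : y = x := eq_of_inner_one x y hx1 hy1 heq
    subst hyx
    rw [heq, one_mul]
  · have hm : -1 < ⟪x, y⟫_ℝ := by linarith
    have hsp := s_pos x y hm hlt
    have hθ0 : 0 < Real.arccos ⟪x, y⟫_ℝ := Real.arccos_pos.mpr hlt
    have hθπ : Real.arccos ⟪x, y⟫_ℝ < Real.pi := lt_of_le_of_ne (Real.arccos_le_pi _) (fun hpi => by have := Real.arccos_eq_pi.mp hpi; linarith)
    have hynx : y ≠ -x := by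
      intro h
      rw [h, inner_neg_right, real_inner_self_eq_norm_sq x, hx1] at hc0
      norm_num at hc0
    have hgeo : IsMinGeodesic (geoSeg x y) x y := ⟨hx1, hy1, Or.inl ⟨hynx, rfl⟩⟩
    have hmemC := geoSeg_mem K hcone hconvex hx hy hm hlt
    -- per-t inequality
    have key : ∀ t ∈ Set.Ioc (0:ℝ) 1,
        2*(Real.cos (t * Real.arccos ⟪x, y⟫_ℝ) -
            ⟪x, y⟫_ℝ * Real.sin (t * Real.arccos ⟪x, y⟫_ℝ) / Real.sqrt (1 - ⟪x, y⟫_ℝ ^ 2)) *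
          (⟪mulVecE A x, y⟫_ℝ - ⟪x, y⟫_ℝ * ⟪mulVecE A x, x⟫_ℝ)
        ≤ (Real.sin (t * Real.arccos ⟪x, y⟫_ℝ) / Real.sqrt (1 - ⟪x, y⟫_ℝ ^ 2)) *
            (⟪mulVecE A x, x⟫_ℝ - ⟪mulVecE A y, y⟫_ℝ) := by
      intro t ht
      have hft := hq x hx y hy (geoSeg x y) hgeo hmemC 0 t 1 le_rfl ht.1.le ht.2 le_rfl
      rw [geoSeg_zero, geoSeg_one x y hm hlt] at hft
      have hft' : ⟪mulVecE A (geoSeg x y t), geoSeg x y t⟫_ℝ ≤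
          max ⟪mulVecE A x, x⟫_ℝ ⟪mulVecE A y, y⟫_ℝ := hft
      rw [max_eq_left hle] at hft'
      have hexp : ⟪mulVecE A (geoSeg x y t), geoSeg x y t⟫_ℝ =
          (Real.cos (t * Real.arccos ⟪x, y⟫_ℝ) -
            ⟪x, y⟫_ℝ * Real.sin (t * Real.arccos ⟪x, y⟫_ℝ) / Real.sqrt (1 - ⟪x, y⟫_ℝ ^ 2))^2
            * ⟪mulVecE A x, x⟫_ℝ
          + 2*(Real.cos (t * Real.arccos ⟪x, y⟫_ℝ) -
            ⟪x, y⟫_ℝ * Real.sin (t * Real.arccos ⟪x, y⟫_ℝ) / Real.sqrt (1 - ⟪x, y⟫_ℝ ^ 2))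
            *(Real.sin (t * Real.arccos ⟪x, y⟫_ℝ) / Real.sqrt (1 - ⟪x, y⟫_ℝ ^ 2))
            *⟪mulVecE A x, y⟫_ℝ
          + (Real.sin (t * Real.arccos ⟪x, y⟫_ℝ) / Real.sqrt (1 - ⟪x, y⟫_ℝ ^ 2))^2
            * ⟪mulVecE A y, y⟫_ℝ := by
        rw [geoSeg_apply x y t]
        exact q_combo hA _ _ x y
      rw [hexp] at hft'
      have hnorm : (Real.cos (t * Real.arccos ⟪x, y⟫_ℝ) -
            ⟪x, y⟫_ℝ * Real.sin (t * Real.arccos ⟪x, y⟫_ℝ) / Real.sqrt (1 - ⟪x, y⟫_ℝ ^ 2))^2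
          + 2*(Real.cos (t * Real.arccos ⟪x, y⟫_ℝ) -
            ⟪x, y⟫_ℝ * Real.sin (t * Real.arccos ⟪x, y⟫_ℝ) / Real.sqrt (1 - ⟪x, y⟫_ℝ ^ 2))
            *(Real.sin (t * Real.arccos ⟪x, y⟫_ℝ) / Real.sqrt (1 - ⟪x, y⟫_ℝ ^ 2))*⟪x, y⟫_ℝ
          + (Real.sin (t * Real.arccos ⟪x, y⟫_ℝ) / Real.sqrt (1 - ⟪x, y⟫_ℝ ^ 2))^2 = 1 := by
        rw [← inner_combo _ _ x y hx1 hy1, ← geoSeg_apply,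
          real_inner_self_eq_norm_sq, norm_geoSeg x y hx1 hy1 hm hlt t]
        norm_num
      have hbpos : 0 < Real.sin (t * Real.arccos ⟪x, y⟫_ℝ) / Real.sqrt (1 - ⟪x, y⟫_ℝ ^ 2) := by
        apply div_pos _ hsp
        apply Real.sin_pos_of_pos_of_lt_pi (mul_pos ht.1 hθ0)
        calc t * Real.arccos ⟪x, y⟫_ℝ ≤ Real.arccos ⟪x, y⟫_ℝ := by nlinarith [ht.2]
        _ < Real.pi := hθπ
      set a := Real.cos (t * Real.arccos ⟪x, y⟫_ℝ) -
            ⟪x, y⟫_ℝ * Real.sin (t * Real.arccos ⟪x, y⟫_ℝ) / Real.sqrt (1 - ⟪x, y⟫_ℝ ^ 2)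
      set b := Real.sin (t * Real.arccos ⟪x, y⟫_ℝ) / Real.sqrt (1 - ⟪x, y⟫_ℝ ^ 2)
      have e3 : (a^2 + 2*a*b*⟪x, y⟫_ℝ + b^2) * ⟪mulVecE A x, x⟫_ℝ = ⟪mulVecE A x, x⟫_ℝ := by
        rw [hnorm, one_mul]
      have key' : 2*a*b*(⟪mulVecE A x, y⟫_ℝ - ⟪x, y⟫_ℝ * ⟪mulVecE A x, x⟫_ℝ)
          ≤ b^2*(⟪mulVecE A x, x⟫_ℝ - ⟪mulVecE A y, y⟫_ℝ) := by nlinarith [hft', e3]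
      refine le_of_mul_le_mul_right ?_ hbpos
      calc 2*a*(⟪mulVecE A x, y⟫_ℝ - ⟪x, y⟫_ℝ * ⟪mulVecE A x, x⟫_ℝ)*b
          = 2*a*b*(⟪mulVecE A x, y⟫_ℝ - ⟪x, y⟫_ℝ * ⟪mulVecE A x, x⟫_ℝ) := by ring
        _ ≤ b^2*(⟪mulVecE A x, x⟫_ℝ - ⟪mulVecE A y, y⟫_ℝ) := key'
        _ = b*(⟪mulVecE A x, x⟫_ℝ - ⟪mulVecE A y, y⟫_ℝ)*b := by ring
    -- take the limit t → 0⁺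
    have hca : Continuous fun t:ℝ => 2*(Real.cos (t * Real.arccos ⟪x, y⟫_ℝ) -
        ⟪x, y⟫_ℝ * Real.sin (t * Real.arccos ⟪x, y⟫_ℝ) / Real.sqrt (1 - ⟪x, y⟫_ℝ ^ 2)) *
          (⟪mulVecE A x, y⟫_ℝ - ⟪x, y⟫_ℝ * ⟪mulVecE A x, x⟫_ℝ) := by
      apply Continuous.mul _ continuous_const
      apply Continuous.mul continuous_const
      exact (Real.continuous_cos.comp (continuous_mul_right _)).sub
        (((continuous_const.mul (Real.continuous_sin.comp (continuous_mul_right _)))).div_const _)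
    have hcb : Continuous fun t:ℝ =>
        (Real.sin (t * Real.arccos ⟪x, y⟫_ℝ) / Real.sqrt (1 - ⟪x, y⟫_ℝ ^ 2)) *
          (⟪mulVecE A x, x⟫_ℝ - ⟪mulVecE A y, y⟫_ℝ) := by
      apply Continuous.mul _ continuous_const
      exact (Real.continuous_sin.comp (continuous_mul_right _)).div_const _
    have hta := (hca.tendsto 0).mono_left (nhdsWithin_le_nhds (s := Set.Ioi (0:ℝ)))
    have htb := (hcb.tendsto 0).mono_left (nhdsWithin_le_nhds (s := Set.Ioi (0:ℝ)))
    have h0a : 2*(Real.cos (0 * Real.arccos ⟪x, y⟫_ℝ) -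
        ⟪x, y⟫_ℝ * Real.sin (0 * Real.arccos ⟪x, y⟫_ℝ) / Real.sqrt (1 - ⟪x, y⟫_ℝ ^ 2)) *
          (⟪mulVecE A x, y⟫_ℝ - ⟪x, y⟫_ℝ * ⟪mulVecE A x, x⟫_ℝ)
        = 2*(⟪mulVecE A x, y⟫_ℝ - ⟪x, y⟫_ℝ * ⟪mulVecE A x, x⟫_ℝ) := by
      simp
    have h0b : (Real.sin (0 * Real.arccos ⟪x, y⟫_ℝ) / Real.sqrt (1 - ⟪x, y⟫_ℝ ^ 2)) *
          (⟪mulVecE A x, x⟫_ℝ - ⟪mulVecE A y, y⟫_ℝ) = 0 := by simp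
    rw [h0a] at hta
    rw [h0b] at htb
    have hev : ∀ᶠ t in nhdsWithin (0:ℝ) (Set.Ioi 0),
        2*(Real.cos (t * Real.arccos ⟪x, y⟫_ℝ) -
          ⟪x, y⟫_ℝ * Real.sin (t * Real.arccos ⟪x, y⟫_ℝ) / Real.sqrt (1 - ⟪x, y⟫_ℝ ^ 2)) *
            (⟪mulVecE A x, y⟫_ℝ - ⟪x, y⟫_ℝ * ⟪mulVecE A x, x⟫_ℝ)
          ≤ (Real.sin (t * Real.arccos ⟪x, y⟫_ℝ) / Real.sqrt (1 - ⟪x, y⟫_ℝ ^ 2)) *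
              (⟪mulVecE A x, x⟫_ℝ - ⟪mulVecE A y, y⟫_ℝ) := by
      filter_upwards [Ioc_mem_nhdsGT_of_mem (Set.left_mem_Ico.mpr one_pos)] with t ht
      exact key t ht
    have hfin := le_of_tendsto_of_tendsto hta htb hev
    linarith

lemma stepB (K : Set E) (hcone : ∀ x ∈ K, ∀ t : ℝ, 0 < t → t • x ∈ K)
    (hconvex : Convex ℝ K) (hsubdual : K ⊆ {x | ∀ y ∈ K, 0 ≤ ⟪x, y⟫_ℝ})
    {A : Matrix (Fin n) (Fin n) ℝ} (hA : A.IsSymm)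
    (hq : SphQuasiConvexOn (Metric.sphere (0:E) 1 ∩ interior K)
      (fun z => ⟪mulVecE A z, z⟫_ℝ))
    {x y : E} (hx : x ∈ Metric.sphere (0:E) 1 ∩ interior K)
    (hy : y ∈ Metric.sphere (0:E) 1 ∩ interior K) :
    ⟪mulVecE A x, y⟫_ℝ ≤ ⟪x, y⟫_ℝ * max ⟪mulVecE A x, x⟫_ℝ ⟪mulVecE A y, y⟫_ℝ := by
  rcases le_total ⟪mulVecE A y, y⟫_ℝ ⟪mulVecE A x, x⟫_ℝ with h | h
  · rw [max_eq_left h]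
    exact stepB' K hcone hconvex hsubdual hA hq hx hy h
  · rw [max_eq_right h]
    have := stepB' K hcone hconvex hsubdual hA hq hy hx h
    rw [← mulVecE_symm hA x y] at this
    rw [← real_inner_comm x y]
    exact this

end SphQC

set_option maxHeartbeats 2000000 in
open SphQC Filter Real in
/-- For a proper subdual cone `K ⊆ ℝⁿ`, `C = 𝕊^{n-1} ∩ int K` and a symmetric matrix `A`,
the quadratic function `q_A(x) = ⟪Ax, x⟫` is spherically quasi-convex on `C` if and only if
`⟪Ax, y⟫ / ⟪x, y⟫ ≤ max {φ_A(x), φ_A(y)}` for all `x, y ∈ K` with `⟪x, y⟫ ≠ 0`, where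
`φ_A(x) = ⟪Ax, x⟫ / ‖x‖²` is the Rayleigh quotient. -/
theorem quadratic_sph_quasiconvex_iff_rayleigh_ineq {n : ℕ}
    (K : Set (EuclideanSpace ℝ (Fin n)))
    (hcone : ∀ x ∈ K, ∀ t : ℝ, 0 < t → t • x ∈ K)
    (hclosed : IsClosed K) (hconvex : Convex ℝ K)
    (hpointed : K ∩ (-K) ⊆ {0}) (hint : (interior K).Nonempty)
    (hsubdual : K ⊆ {x | ∀ y ∈ K, 0 ≤ ⟪x, y⟫_ℝ})
    (A : Matrix (Fin n) (Fin n) ℝ) (hA : A.IsSymm) :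
    SphQuasiConvexOn (Metric.sphere 0 1 ∩ interior K)
        (fun x => ⟪mulVecE A x, x⟫_ℝ) ↔
      ∀ x ∈ K, ∀ y ∈ K, ⟪x, y⟫_ℝ ≠ 0 →
        ⟪mulVecE A x, y⟫_ℝ / ⟪x, y⟫_ℝ ≤
          max (⟪mulVecE A x, x⟫_ℝ / ‖x‖ ^ 2) (⟪mulVecE A y, y⟫_ℝ / ‖y‖ ^ 2) := by
  constructor
  · intro hq x hx y hy hne
    have hc0 : 0 < ⟪x, y⟫_ℝ := lt_of_le_of_ne (hsubdual hx y hy) (Ne.symm hne)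
    have hx0 : x ≠ 0 := by intro h; rw [h] at hne; simp at hne
    have hy0 : y ≠ 0 := by intro h; rw [h] at hne; simp at hne
    obtain ⟨e, he⟩ := hint
    have hu_int : ∀ k : ℕ, x + (1/(k+1) : ℝ) • e ∈ interior K := fun k =>
      add_mem_interior K hcone hconvex hx (smul_mem_interior K hcone (by positivity) he)
    have hv_int : ∀ k : ℕ, y + (1/(k+1) : ℝ) • e ∈ interior K := fun k =>
      add_mem_interior K hcone hconvex hy (smul_mem_interior K hcone (by positivity) he)
    have hu_ne : ∀ k : ℕ, x + (1/(k+1) : ℝ) • e ≠ 0 := by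
      intro k h
      have := inner_pos_of_interior K hsubdual (hu_int k) hx hx0
      rw [h] at this; simp at this
    have hv_ne : ∀ k : ℕ, y + (1/(k+1) : ℝ) • e ≠ 0 := by
      intro k h
      have := inner_pos_of_interior K hsubdual (hv_int k) hy hy0
      rw [h] at this; simp at this
    set u : ℕ → EuclideanSpace ℝ (Fin n) :=
      fun k => ‖x + (1/(k+1) : ℝ) • e‖⁻¹ • (x + (1/(k+1) : ℝ) • e) with hudef
    set v : ℕ → EuclideanSpace ℝ (Fin n) :=
      fun k => ‖y + (1/(k+1) : ℝ) • e‖⁻¹ • (y + (1/(k+1) : ℝ) • e) with hvdef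
    have hu_mem : ∀ k, u k ∈ Metric.sphere (0 : EuclideanSpace ℝ (Fin n)) 1 ∩ interior K :=
      fun k => ⟨mem_sphere_zero_iff_norm.mpr (norm_smul_inv_norm (hu_ne k)),
        smul_mem_interior K hcone (inv_pos.mpr (norm_pos_iff.mpr (hu_ne k))) (hu_int k)⟩
    have hv_mem : ∀ k, v k ∈ Metric.sphere (0 : EuclideanSpace ℝ (Fin n)) 1 ∩ interior K :=
      fun k => ⟨mem_sphere_zero_iff_norm.mpr (norm_smul_inv_norm (hv_ne k)),
        smul_mem_interior K hcone (inv_pos.mpr (norm_pos_iff.mpr (hv_ne k))) (hv_int k)⟩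
    have hkineq : ∀ k, ⟪mulVecE A (u k), v k⟫_ℝ ≤
        ⟪u k, v k⟫_ℝ * max ⟪mulVecE A (u k), u k⟫_ℝ ⟪mulVecE A (v k), v k⟫_ℝ :=
      fun k => stepB K hcone hconvex hsubdual hA hq (hu_mem k) (hv_mem k)
    -- limits
    have h1k : Tendsto (fun k : ℕ => (1/(k+1) : ℝ)) atTop (nhds 0) :=
      tendsto_one_div_add_atTop_nhds_zero_nat
    have hsl : Tendsto (fun k : ℕ => (1/(k+1) : ℝ) • e) atTop (nhds 0) := by
      have h2 := h1k.smul_const e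
      rwa [zero_smul] at h2
    have hulim0 : Tendsto (fun k : ℕ => x + (1/(k+1) : ℝ) • e) atTop (nhds x) := by
      have := (tendsto_const_nhds (x := x) (f := atTop (α := ℕ))).add hsl
      simpa using this
    have hvlim0 : Tendsto (fun k : ℕ => y + (1/(k+1) : ℝ) • e) atTop (nhds y) := by
      have := (tendsto_const_nhds (x := y) (f := atTop (α := ℕ))).add hsl
      simpa using this
    have hulim : Tendsto u atTop (nhds (‖x‖⁻¹ • x)) :=
      ((hulim0.norm).inv₀ (norm_ne_zero_iff.mpr hx0)).smul hulim0
    have hvlim : Tendsto v atTop (nhds (‖y‖⁻¹ • y)) :=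
      ((hvlim0.norm).inv₀ (norm_ne_zero_iff.mpr hy0)).smul hvlim0
    have hAu : Tendsto (fun k => mulVecE A (u k)) atTop (nhds (mulVecE A (‖x‖⁻¹ • x))) :=
      ((continuous_mulVecE A).tendsto _).comp hulim
    have hAv : Tendsto (fun k => mulVecE A (v k)) atTop (nhds (mulVecE A (‖y‖⁻¹ • y))) :=
      ((continuous_mulVecE A).tendsto _).comp hvlim
    have hL : Tendsto (fun k => ⟪mulVecE A (u k), v k⟫_ℝ) atTop
        (nhds ⟪mulVecE A (‖x‖⁻¹ • x), ‖y‖⁻¹ • y⟫_ℝ) := hAu.inner hvlim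
    have hIn : Tendsto (fun k => ⟪u k, v k⟫_ℝ) atTop
        (nhds ⟪‖x‖⁻¹ • x, ‖y‖⁻¹ • y⟫_ℝ) := hulim.inner hvlim
    have hQ1 : Tendsto (fun k => ⟪mulVecE A (u k), u k⟫_ℝ) atTop
        (nhds ⟪mulVecE A (‖x‖⁻¹ • x), ‖x‖⁻¹ • x⟫_ℝ) := hAu.inner hulim
    have hQ2 : Tendsto (fun k => ⟪mulVecE A (v k), v k⟫_ℝ) atTop
        (nhds ⟪mulVecE A (‖y‖⁻¹ • y), ‖y‖⁻¹ • y⟫_ℝ) := hAv.inner hvlim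
    have hfin := le_of_tendsto_of_tendsto hL (hIn.mul (hQ1.max hQ2))
      (Filter.Eventually.of_forall hkineq)
    -- unscale
    have hrx : (0:ℝ) < ‖x‖ := norm_pos_iff.mpr hx0
    have hry : (0:ℝ) < ‖y‖ := norm_pos_iff.mpr hy0
    have eL : ⟪mulVecE A (‖x‖⁻¹ • x), ‖y‖⁻¹ • y⟫_ℝ
        = ‖x‖⁻¹ * (‖y‖⁻¹ * ⟪mulVecE A x, y⟫_ℝ) := by
      rw [mulVecE_smul, real_inner_smul_left, real_inner_smul_right]
    have eI : ⟪(‖x‖⁻¹ • x : EuclideanSpace ℝ (Fin n)), ‖y‖⁻¹ • y⟫_ℝ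
        = ‖x‖⁻¹ * (‖y‖⁻¹ * ⟪x, y⟫_ℝ) := by
      rw [real_inner_smul_left, real_inner_smul_right]
    have eQ1 : ⟪mulVecE A (‖x‖⁻¹ • x), ‖x‖⁻¹ • x⟫_ℝ = ⟪mulVecE A x, x⟫_ℝ / ‖x‖ ^ 2 := by
      rw [mulVecE_smul, real_inner_smul_left, real_inner_smul_right, pow_two]
      field_simp
    have eQ2 : ⟪mulVecE A (‖y‖⁻¹ • y), ‖y‖⁻¹ • y⟫_ℝ = ⟪mulVecE A y, y⟫_ℝ / ‖y‖ ^ 2 := by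
      rw [mulVecE_smul, real_inner_smul_left, real_inner_smul_right, pow_two]
      field_simp
    rw [eL, eI, eQ1, eQ2] at hfin
    rw [div_le_iff₀ hc0]
    have h2 := mul_le_mul_of_nonneg_left hfin (mul_pos hrx hry).le
    calc ⟪mulVecE A x, y⟫_ℝ
        = (‖x‖ * ‖y‖) * (‖x‖⁻¹ * (‖y‖⁻¹ * ⟪mulVecE A x, y⟫_ℝ)) := by
          field_simp
      _ ≤ (‖x‖ * ‖y‖) * ((‖x‖⁻¹ * (‖y‖⁻¹ * ⟪x, y⟫_ℝ)) *
            max (⟪mulVecE A x, x⟫_ℝ / ‖x‖ ^ 2) (⟪mulVecE A y, y⟫_ℝ / ‖y‖ ^ 2)) := h2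
      _ = max (⟪mulVecE A x, x⟫_ℝ / ‖x‖ ^ 2) (⟪mulVecE A y, y⟫_ℝ / ‖y‖ ^ 2) * ⟪x, y⟫_ℝ := by
          field_simp
  · intro hineq x hx y hy γ hγ hmem t₁ t t₂ h0 h1 h2 h3
    obtain ⟨hx1, hy1, hbr⟩ := hγ
    rcases hbr with ⟨hynx, hγeq⟩ | ⟨hyx, -⟩
    ·
      subst hγeq
      have hcb : |⟪x, y⟫_ℝ| ≤ 1 := by
        have := abs_real_inner_le_norm x y
        rw [hx1, hy1] at this; simpa using this
      obtain ⟨hm', hle'⟩ := abs_le.mp hcb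
      have hm : -1 < ⟪x, y⟫_ℝ := lt_of_le_of_ne hm'
        (fun h => hynx (neg_of_inner_neg_one x y hx1 hy1 h.symm))
      rcases hle'.eq_or_lt with hceq | hclt
      · rw [geoSeg_const x y hceq t, geoSeg_const x y hceq t₁]
        exact le_max_left _ _
      · rcases (h1.trans h2).eq_or_lt with h12 | h12
        · have ht1 : t = t₁ := le_antisymm (h12 ▸ h2) h1
          rw [ht1]; exact le_max_left _ _
        · have hx' := hmem t₁ ⟨h0, by linarith⟩
          have hy' := hmem t₂ ⟨by linarith, h3⟩
          have ht' := hmem t ⟨by linarith, by linarith⟩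
          have hn1 : ‖geoSeg x y t₁‖ = 1 := mem_sphere_zero_iff_norm.mp hx'.1
          have hn2 : ‖geoSeg x y t₂‖ = 1 := mem_sphere_zero_iff_norm.mp hy'.1
          have hnt : ‖geoSeg x y t‖ = 1 := mem_sphere_zero_iff_norm.mp ht'.1
          have hy'0 : geoSeg x y t₂ ≠ 0 := by
            intro h; rw [h, norm_zero] at hn2; norm_num at hn2
          have hc' : 0 < ⟪geoSeg x y t₁, geoSeg x y t₂⟫_ℝ :=
            inner_pos_of_interior K hsubdual hx'.2 (interior_subset hy'.2) hy'0
          have hθ0 : 0 < Real.arccos ⟪x, y⟫_ℝ := Real.arccos_pos.mpr hclt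
          have hθπ : Real.arccos ⟪x, y⟫_ℝ < Real.pi :=
            lt_of_le_of_ne (Real.arccos_le_pi _)
              (fun hpi => by have := Real.arccos_eq_pi.mp hpi; linarith)
          have hDpos : 0 < Real.sin ((t₂ - t₁) * Real.arccos ⟪x, y⟫_ℝ) := by
            apply Real.sin_pos_of_pos_of_lt_pi (mul_pos (by linarith) hθ0)
            calc (t₂ - t₁) * Real.arccos ⟪x, y⟫_ℝ ≤ Real.arccos ⟪x, y⟫_ℝ := by
                  nlinarith [hθ0.le]
              _ < Real.pi := hθπ
          have hcombo := geoSeg_combo x y hm hclt t₁ t t₂ hDpos.ne'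
          have hα : 0 ≤ Real.sin ((t₂ - t) * Real.arccos ⟪x, y⟫_ℝ) /
              Real.sin ((t₂ - t₁) * Real.arccos ⟪x, y⟫_ℝ) := by
            apply div_nonneg _ hDpos.le
            apply Real.sin_nonneg_of_nonneg_of_le_pi (mul_nonneg (by linarith) hθ0.le)
            calc (t₂ - t) * Real.arccos ⟪x, y⟫_ℝ ≤ Real.arccos ⟪x, y⟫_ℝ := by
                  nlinarith [hθ0.le]
              _ ≤ Real.pi := hθπ.le
          have hβ : 0 ≤ Real.sin ((t - t₁) * Real.arccos ⟪x, y⟫_ℝ) /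
              Real.sin ((t₂ - t₁) * Real.arccos ⟪x, y⟫_ℝ) := by
            apply div_nonneg _ hDpos.le
            apply Real.sin_nonneg_of_nonneg_of_le_pi (mul_nonneg (by linarith) hθ0.le)
            calc (t - t₁) * Real.arccos ⟪x, y⟫_ℝ ≤ Real.arccos ⟪x, y⟫_ℝ := by
                  nlinarith [hθ0.le]
              _ ≤ Real.pi := hθπ.le
          have happ := hineq (geoSeg x y t₁) (interior_subset hx'.2)
            (geoSeg x y t₂) (interior_subset hy'.2) hc'.ne'
          rw [hn1, hn2, one_pow, div_one, div_one] at happ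
          have happ' : ⟪mulVecE A (geoSeg x y t₁), geoSeg x y t₂⟫_ℝ ≤
              ⟪geoSeg x y t₁, geoSeg x y t₂⟫_ℝ *
                max ⟪mulVecE A (geoSeg x y t₁), geoSeg x y t₁⟫_ℝ
                  ⟪mulVecE A (geoSeg x y t₂), geoSeg x y t₂⟫_ℝ := by
            rw [div_le_iff₀ hc'] at happ
            linarith
          have hexp : ⟪mulVecE A (geoSeg x y t), geoSeg x y t⟫_ℝ =
              (Real.sin ((t₂ - t) * Real.arccos ⟪x, y⟫_ℝ) /
                Real.sin ((t₂ - t₁) * Real.arccos ⟪x, y⟫_ℝ))^2 *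
                  ⟪mulVecE A (geoSeg x y t₁), geoSeg x y t₁⟫_ℝ
              + 2*(Real.sin ((t₂ - t) * Real.arccos ⟪x, y⟫_ℝ) /
                Real.sin ((t₂ - t₁) * Real.arccos ⟪x, y⟫_ℝ))
                *(Real.sin ((t - t₁) * Real.arccos ⟪x, y⟫_ℝ) /
                Real.sin ((t₂ - t₁) * Real.arccos ⟪x, y⟫_ℝ))
                *⟪mulVecE A (geoSeg x y t₁), geoSeg x y t₂⟫_ℝ
              + (Real.sin ((t - t₁) * Real.arccos ⟪x, y⟫_ℝ) /
                Real.sin ((t₂ - t₁) * Real.arccos ⟪x, y⟫_ℝ))^2 *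
                  ⟪mulVecE A (geoSeg x y t₂), geoSeg x y t₂⟫_ℝ := by
            rw [hcombo]
            exact q_combo hA _ _ _ _
          have hnorm : (Real.sin ((t₂ - t) * Real.arccos ⟪x, y⟫_ℝ) /
                Real.sin ((t₂ - t₁) * Real.arccos ⟪x, y⟫_ℝ))^2
              + 2*(Real.sin ((t₂ - t) * Real.arccos ⟪x, y⟫_ℝ) /
                Real.sin ((t₂ - t₁) * Real.arccos ⟪x, y⟫_ℝ))
                *(Real.sin ((t - t₁) * Real.arccos ⟪x, y⟫_ℝ) /
                Real.sin ((t₂ - t₁) * Real.arccos ⟪x, y⟫_ℝ))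
                *⟪geoSeg x y t₁, geoSeg x y t₂⟫_ℝ
              + (Real.sin ((t - t₁) * Real.arccos ⟪x, y⟫_ℝ) /
                Real.sin ((t₂ - t₁) * Real.arccos ⟪x, y⟫_ℝ))^2 = 1 := by
            rw [← inner_combo _ _ _ _ hn1 hn2, ← hcombo,
              real_inner_self_eq_norm_sq, hnt]
            norm_num
          show ⟪mulVecE A (geoSeg x y t), geoSeg x y t⟫_ℝ ≤
            max ⟪mulVecE A (geoSeg x y t₁), geoSeg x y t₁⟫_ℝ
              ⟪mulVecE A (geoSeg x y t₂), geoSeg x y t₂⟫_ℝ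
          set M := max ⟪mulVecE A (geoSeg x y t₁), geoSeg x y t₁⟫_ℝ
              ⟪mulVecE A (geoSeg x y t₂), geoSeg x y t₂⟫_ℝ with hMdef
          have hq1 : ⟪mulVecE A (geoSeg x y t₁), geoSeg x y t₁⟫_ℝ ≤ M := le_max_left _ _
          have hq2 : ⟪mulVecE A (geoSeg x y t₂), geoSeg x y t₂⟫_ℝ ≤ M := le_max_right _ _
          have e : ⟪mulVecE A (geoSeg x y t), geoSeg x y t⟫_ℝ - M =
              (Real.sin ((t₂ - t) * Real.arccos ⟪x, y⟫_ℝ) /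
                Real.sin ((t₂ - t₁) * Real.arccos ⟪x, y⟫_ℝ))^2 *
                  (⟪mulVecE A (geoSeg x y t₁), geoSeg x y t₁⟫_ℝ - M)
              + (Real.sin ((t - t₁) * Real.arccos ⟪x, y⟫_ℝ) /
                Real.sin ((t₂ - t₁) * Real.arccos ⟪x, y⟫_ℝ))^2 *
                  (⟪mulVecE A (geoSeg x y t₂), geoSeg x y t₂⟫_ℝ - M)
              + 2*(Real.sin ((t₂ - t) * Real.arccos ⟪x, y⟫_ℝ) /
                Real.sin ((t₂ - t₁) * Real.arccos ⟪x, y⟫_ℝ))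
                *(Real.sin ((t - t₁) * Real.arccos ⟪x, y⟫_ℝ) /
                Real.sin ((t₂ - t₁) * Real.arccos ⟪x, y⟫_ℝ))
                *(⟪mulVecE A (geoSeg x y t₁), geoSeg x y t₂⟫_ℝ -
                  ⟪geoSeg x y t₁, geoSeg x y t₂⟫_ℝ * M) := by
            linear_combination hexp + M * hnorm
          have tm1 : (Real.sin ((t₂ - t) * Real.arccos ⟪x, y⟫_ℝ) /
                Real.sin ((t₂ - t₁) * Real.arccos ⟪x, y⟫_ℝ))^2 *
                  (⟪mulVecE A (geoSeg x y t₁), geoSeg x y t₁⟫_ℝ - M) ≤ 0 :=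
            mul_nonpos_of_nonneg_of_nonpos (sq_nonneg _) (by linarith)
          have tm2 : (Real.sin ((t - t₁) * Real.arccos ⟪x, y⟫_ℝ) /
                Real.sin ((t₂ - t₁) * Real.arccos ⟪x, y⟫_ℝ))^2 *
                  (⟪mulVecE A (geoSeg x y t₂), geoSeg x y t₂⟫_ℝ - M) ≤ 0 :=
            mul_nonpos_of_nonneg_of_nonpos (sq_nonneg _) (by linarith)
          have tm3 : 2*(Real.sin ((t₂ - t) * Real.arccos ⟪x, y⟫_ℝ) /
                Real.sin ((t₂ - t₁) * Real.arccos ⟪x, y⟫_ℝ))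
                *(Real.sin ((t - t₁) * Real.arccos ⟪x, y⟫_ℝ) /
                Real.sin ((t₂ - t₁) * Real.arccos ⟪x, y⟫_ℝ))
                *(⟪mulVecE A (geoSeg x y t₁), geoSeg x y t₂⟫_ℝ -
                  ⟪geoSeg x y t₁, geoSeg x y t₂⟫_ℝ * M) ≤ 0 := by
            apply mul_nonpos_of_nonneg_of_nonpos
            · positivity
            · linarith
          linarith
    ·
      exfalso
      have hxK : x ∈ K := interior_subset hx.2
      have hyK : y ∈ K := interior_subset hy.2
      have hxneg : x ∈ -K := by rw [Set.mem_neg, ← hyx]; exact hyK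
      have h00 := hpointed ⟨hxK, hxneg⟩
      rw [Set.mem_singleton_iff] at h00
      rw [h00, norm_zero] at hx1; norm_num at hx1
end

section
/- Let K ⊆ ℝⁿ be a self-dual proper cone, C = 𝕊^{n-1} ∩ int(K), and A ∈ ℝ^{n×n} a symmetric matrix. If the quadratic function q_A : C → ℝ, q_A(x) = ⟨Ax, x⟩, is spherically quasi-convex, then A has the K-Z-property, i.e., ⟨Ax, y⟩ ≤ 0 for all x ∈ K and y ∈ K* with ⟨x, y⟩ = 0. -/
open scoped InnerProductSpace

/-!
Suppose `⟪A x, y⟫ > 0` for orthogonal `x, y ∈ K = K*`, normalised to unit length. Along the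
quarter circle `s ↦ cos s • x + sin s • y`, the minimal geodesic from `x` to `y`, the quadratic
form equals `a cos² s + 2 b cos s sin s + c sin² s` with `b = ⟪A x, y⟫ > 0`; since the
off-diagonal entry of `!![a, b; b, c]` is nonzero, its top eigenvalue exceeds both `a` and `c`, so
the form rises strictly above its values at both endpoints, against quasi-convexity. The arc may
run along the boundary of `K`, where quasi-convexity is not assumed; but pushing `x` and `y`
slightly into the interior and renormalising gives geodesics in `𝕊ⁿ⁻¹ ∩ int K` that converge to
the arc, and the quasi-convexity inequality survives the limit by continuity.
-/

open Real Filter Topology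

lemma exists_max_lt_cos_sq_mul_add {a b c : ℝ} (hb : 0 < b) :
    ∃ s ∈ Set.Icc 0 (π / 2),
      max a c < cos s ^ 2 * a + 2 * cos s * sin s * b + sin s ^ 2 * c := by
  set P := (a - c) / 2
  set R := √(P ^ 2 + b ^ 2)
  have hR2 : R ^ 2 = P ^ 2 + b ^ 2 := sq_sqrt (by positivity)
  have hR : 0 < R := sqrt_pos.mpr (by positivity)
  have hPR : P < R := by nlinarith
  -- `(1, τ)` is an eigenvector of `!![a, b; b, c]` for its top eigenvalue `(a + c) / 2 + R`
  set τ := (R - P) / b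
  have hτ : 0 < τ := div_pos (by linarith) hb
  have hbτ : b * τ = R - P := mul_div_cancel₀ _ hb.ne'
  refine ⟨arctan τ, ⟨(arctan_pos.mpr hτ).le, (arctan_lt_pi_div_two τ).le⟩, ?_⟩
  have hN : √(1 + τ ^ 2) ^ 2 = 1 + τ ^ 2 := sq_sqrt (by positivity)
  have hval : cos (arctan τ) ^ 2 * a + 2 * cos (arctan τ) * sin (arctan τ) * b
      + sin (arctan τ) ^ 2 * c = (a + 2 * b * τ + c * τ ^ 2) / (1 + τ ^ 2) := by
    rw [cos_arctan, sin_arctan]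
    field_simp
    rw [hN]
  rw [hval, max_lt_iff, lt_div_iff₀ (by positivity), lt_div_iff₀ (by positivity)]
  have hP : a - c = 2 * P := by ring
  have hgap : b * (b - P * τ) = R * (R - P) := by linear_combination (-P) * hbτ - hR2
  have hgap' : 0 < b - P * τ := pos_of_mul_pos_right (hgap ▸ mul_pos hR (by linarith)) hb.le
  constructor
  · nlinarith [mul_pos hτ hgap']
  · nlinarith

lemma sqrt_one_sub_sq_ne_zero {ρ : ℝ} (h : |ρ| < 1) : √(1 - ρ ^ 2) ≠ 0 := by
  rw [Real.sqrt_ne_zero']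
  nlinarith [abs_lt.mp h]

section Cone

variable {E : Type*} [NormedAddCommGroup E] [NormedSpace ℝ E] {K : Set E}

open scoped Pointwise in
lemma smul_mem_interior_of_cone (hK : ∀ x ∈ K, ∀ t : ℝ, 0 < t → t • x ∈ K)
    {z : E} (hz : z ∈ interior K) {t : ℝ} (ht : 0 < t) :
    t • z ∈ interior K := by
  have hsub : t • K ⊆ K := by
    rintro _ ⟨w, hw, rfl⟩
    exact hK w hw t ht
  rw [← Set.smul_mem_smul_set_iff₀ ht.ne'] at hz
  exact interior_mono hsub ((interior_smul₀ ht.ne' K).symm ▸ hz)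

lemma add_mem_interior_of_cone (hK : ∀ x ∈ K, ∀ t : ℝ, 0 < t → t • x ∈ K)
    (hconv : Convex ℝ K) {x z : E} (hx : x ∈ K) (hz : z ∈ interior K) :
    x + z ∈ interior K := by
  have hmid := hconv.combo_self_interior_mem_interior hx hz (by norm_num : (0 : ℝ) ≤ 1 / 2)
    (by norm_num : (0 : ℝ) < 1 / 2) (by norm_num)
  convert smul_mem_interior_of_cone hK hmid two_pos using 1
  module

lemma smul_add_smul_mem_interior_of_cone (hK : ∀ x ∈ K, ∀ t : ℝ, 0 < t → t • x ∈ K)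
    (hconv : Convex ℝ K) {x y : E} (hx : x ∈ interior K) (hy : y ∈ interior K) {α β : ℝ}
    (hα : 0 ≤ α) (hβ : 0 ≤ β) (hαβ : 0 < α + β) :
    α • x + β • y ∈ interior K := by
  convert smul_mem_interior_of_cone hK
    (convex_iff_div.mp hconv.interior hx hy hα hβ hαβ) hαβ using 1
  match_scalars <;> field_simp

lemma tendsto_add_smul_nhds_zero (x e : E) :
    Tendsto (fun ε : ℝ => x + ε • e) (𝓝 0) (𝓝 x) :=
  (continuous_const.add (continuous_id.smul continuous_const)).tendsto' 0 x (by simp)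

lemma tendsto_inv_norm_smul_add_smul {x : E} (hx : ‖x‖ = 1) (e : E) :
    Tendsto (fun ε : ℝ => ‖x + ε • e‖⁻¹ • (x + ε • e)) (𝓝 0) (𝓝 x) := by
  have h := tendsto_add_smul_nhds_zero x e
  simpa [hx] using (h.norm.inv₀ (by simp [hx])).smul h

lemma eventually_inv_norm_smul_add_smul_mem (hK : ∀ x ∈ K, ∀ t : ℝ, 0 < t → t • x ∈ K)
    (hconv : Convex ℝ K) {x e : E} (hxK : x ∈ K) (hx : x ≠ 0) (he : e ∈ interior K) :
    ∀ᶠ ε in 𝓝[>] (0 : ℝ),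
      ‖x + ε • e‖⁻¹ • (x + ε • e) ∈ Metric.sphere 0 1 ∩ interior K := by
  have hne : ∀ᶠ ε in 𝓝 (0 : ℝ), x + ε • e ≠ 0 :=
    (tendsto_add_smul_nhds_zero x e).eventually_ne hx
  filter_upwards [nhdsWithin_le_nhds hne, self_mem_nhdsWithin] with ε hε hεpos
  have hint := add_mem_interior_of_cone hK hconv hxK (smul_mem_interior_of_cone hK he hεpos)
  exact ⟨mem_sphere_zero_iff_norm.mpr (norm_smul_inv_norm hε),
    smul_mem_interior_of_cone hK hint (inv_pos.mpr (norm_pos_iff.mpr hε))⟩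

end Cone

section Sphere

variable {n : ℕ} {x y : EuclideanSpace ℝ (Fin n)}

lemma mulVecE_eq_toEuclideanLin (A : Matrix (Fin n) (Fin n) ℝ) :
    mulVecE A = Matrix.toEuclideanLin A := rfl

lemma continuous_mulVecE (A : Matrix (Fin n) (Fin n) ℝ) : Continuous (mulVecE A) := by
  rw [mulVecE_eq_toEuclideanLin]
  exact LinearMap.continuous_of_finiteDimensional _

lemma inner_mulVecE_comm {A : Matrix (Fin n) (Fin n) ℝ} (hA : A.IsSymm)
    (x y : EuclideanSpace ℝ (Fin n)) : ⟪mulVecE A x, y⟫_ℝ = ⟪x, mulVecE A y⟫_ℝ :=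
  (Matrix.isSymmetric_toEuclideanLin_iff.mpr (Matrix.isHermitian_iff_isSymm.mpr hA)) x y

lemma inner_mulVecE_smul_add_smul {A : Matrix (Fin n) (Fin n) ℝ} (hA : A.IsSymm)
    (u w : EuclideanSpace ℝ (Fin n)) (α β : ℝ) :
    ⟪mulVecE A (α • u + β • w), α • u + β • w⟫_ℝ =
      α ^ 2 * ⟪mulVecE A u, u⟫_ℝ + 2 * α * β * ⟪mulVecE A u, w⟫_ℝ
        + β ^ 2 * ⟪mulVecE A w, w⟫_ℝ := by
  have hwu : ⟪mulVecE A w, u⟫_ℝ = ⟪mulVecE A u, w⟫_ℝ := by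
    rw [inner_mulVecE_comm hA, real_inner_comm]
  have hlin : mulVecE A (α • u + β • w) = α • mulVecE A u + β • mulVecE A w := by
    simp [mulVecE_eq_toEuclideanLin]
  simp only [hlin, inner_add_left, inner_add_right, real_inner_smul_left, real_inner_smul_right,
    hwu]
  ring

lemma geoSeg_zero (x y : EuclideanSpace ℝ (Fin n)) : geoSeg x y 0 = x := by
  simp [geoSeg]

lemma geoSeg_one (hxy : |⟪x, y⟫_ℝ| < 1) : geoSeg x y 1 = y := by
  have hσ := sqrt_one_sub_sq_ne_zero hxy
  have hρ := abs_lt.mp hxy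
  simp only [geoSeg, one_mul, cos_arccos hρ.1.le hρ.2.le, sin_arccos, mul_div_assoc,
    div_self hσ, mul_one, sub_self, zero_smul, one_smul, zero_add]

lemma geoSeg_of_inner_eq_zero (hxy : ⟪x, y⟫_ℝ = 0) (t : ℝ) :
    geoSeg x y t = cos (t * (π / 2)) • x + sin (t * (π / 2)) • y := by
  simp [geoSeg, hxy]

lemma geoSeg_eq_sin_smul_add_sin_smul (hxy : |⟪x, y⟫_ℝ| < 1) (t : ℝ) :
    geoSeg x y t =
      (sin ((1 - t) * arccos ⟪x, y⟫_ℝ) / sin (arccos ⟪x, y⟫_ℝ)) • x +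
        (sin (t * arccos ⟪x, y⟫_ℝ) / sin (arccos ⟪x, y⟫_ℝ)) • y := by
  have hσ := sqrt_one_sub_sq_ne_zero hxy
  have hρ := abs_lt.mp hxy
  rw [geoSeg, sin_arccos, sub_mul, one_mul, sin_sub, sin_arccos, cos_arccos hρ.1.le hρ.2.le]
  match_scalars
  · field_simp
  · rfl

lemma norm_geoSeg (hx : ‖x‖ = 1) (hy : ‖y‖ = 1) (hxy : |⟪x, y⟫_ℝ| < 1) (t : ℝ) :
    ‖geoSeg x y t‖ = 1 := by
  have hσ := sqrt_one_sub_sq_ne_zero hxy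
  have hσ2 : √(1 - ⟪x, y⟫_ℝ ^ 2) ^ 2 = 1 - ⟪x, y⟫_ℝ ^ 2 :=
    Real.sq_sqrt (by nlinarith [abs_lt.mp hxy])
  rw [← pow_eq_one_iff_of_nonneg (norm_nonneg _) two_ne_zero, geoSeg, norm_add_sq_real,
    norm_smul, norm_smul, real_inner_smul_left, real_inner_smul_right, hx, hy, mul_pow, mul_pow,
    Real.norm_eq_abs, Real.norm_eq_abs, sq_abs, sq_abs]
  field_simp
  linear_combination √(1 - ⟪x, y⟫_ℝ ^ 2) ^ 2 * sin_sq_add_cos_sq (t * arccos ⟪x, y⟫_ℝ)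
    - sin (t * arccos ⟪x, y⟫_ℝ) ^ 2 * hσ2

lemma isMinGeodesic_geoSeg (hx : ‖x‖ = 1) (hy : ‖y‖ = 1) (hxy : |⟪x, y⟫_ℝ| < 1) :
    IsMinGeodesic (geoSeg x y) x y := by
  refine ⟨hx, hy, Or.inl ⟨?_, rfl⟩⟩
  rintro rfl
  simp [inner_neg_right, hx] at hxy

lemma tendsto_geoSeg {ι : Type*} {l : Filter ι} {u v : ι → EuclideanSpace ℝ (Fin n)}
    (hu : Tendsto u l (𝓝 x)) (hv : Tendsto v l (𝓝 y)) (hxy : |⟪x, y⟫_ℝ| < 1) (t : ℝ) :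
    Tendsto (fun i => geoSeg (u i) (v i) t) l (𝓝 (geoSeg x y t)) := by
  have hσ := sqrt_one_sub_sq_ne_zero hxy
  have hρ : Tendsto (fun i => ⟪u i, v i⟫_ℝ) l (𝓝 ⟪x, y⟫_ℝ) := hu.inner hv
  have hθ := hρ.arccos.const_mul t
  have hcos := (continuous_cos.tendsto _).comp hθ
  have hsin := (continuous_sin.tendsto _).comp hθ
  have hσ' := ((hρ.pow 2).const_sub 1).sqrt
  exact ((hcos.sub ((hρ.mul hsin).div hσ' hσ)).smul hu).add ((hsin.div hσ' hσ).smul hv)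

lemma geoSeg_mem_sphere_inter_interior {K : Set (EuclideanSpace ℝ (Fin n))}
    (hK : ∀ x ∈ K, ∀ t : ℝ, 0 < t → t • x ∈ K) (hconv : Convex ℝ K)
    (hx : x ∈ Metric.sphere 0 1 ∩ interior K) (hy : y ∈ Metric.sphere 0 1 ∩ interior K)
    (hxy : |⟪x, y⟫_ℝ| < 1) {t : ℝ} (ht : t ∈ Set.Icc (0 : ℝ) 1) :
    geoSeg x y t ∈ Metric.sphere 0 1 ∩ interior K := by
  have hnorm := norm_geoSeg (mem_sphere_zero_iff_norm.mp hx.1) (mem_sphere_zero_iff_norm.mp hy.1)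
    hxy t
  refine ⟨mem_sphere_zero_iff_norm.mpr hnorm, ?_⟩
  have hρ := abs_lt.mp hxy
  set θ := arccos ⟪x, y⟫_ℝ
  have hθ : θ ∈ Set.Ioo 0 π := ⟨arccos_pos.mpr hρ.2, arccos_lt_pi.mpr hρ.1⟩
  have hsinθ : 0 < sin θ := sin_pos_of_pos_of_lt_pi hθ.1 hθ.2
  have htθ : 0 ≤ t * θ := mul_nonneg ht.1 hθ.1.le
  have htθ' : t * θ ≤ θ := mul_le_of_le_one_left hθ.1.le ht.2
  have hα : 0 ≤ sin ((1 - t) * θ) / sin θ :=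
    div_nonneg (sin_nonneg_of_nonneg_of_le_pi (by linarith) (by linarith [hθ.2])) hsinθ.le
  have hβ : 0 ≤ sin (t * θ) / sin θ :=
    div_nonneg (sin_nonneg_of_nonneg_of_le_pi htθ (by linarith [hθ.2])) hsinθ.le
  rw [geoSeg_eq_sin_smul_add_sin_smul hxy] at hnorm ⊢
  refine smul_add_smul_mem_interior_of_cone hK hconv hx.2 hy.2 hα hβ ?_
  -- the coefficients cannot both vanish, since the point has norm one
  by_contra! h
  rw [le_antisymm (by linarith) hα, le_antisymm (by linarith) hβ] at hnorm
  simp at hnorm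

lemma SphQuasiConvexOn.apply_cos_smul_add_sin_smul_le_max {K : Set (EuclideanSpace ℝ (Fin n))}
    (hK : ∀ x ∈ K, ∀ t : ℝ, 0 < t → t • x ∈ K) (hconv : Convex ℝ K)
    (hint : (interior K).Nonempty) {f : EuclideanSpace ℝ (Fin n) → ℝ} (hf : Continuous f)
    (hq : SphQuasiConvexOn (Metric.sphere 0 1 ∩ interior K) f) (hxK : x ∈ K) (hyK : y ∈ K)
    (hx : ‖x‖ = 1) (hy : ‖y‖ = 1) (hxy : ⟪x, y⟫_ℝ = 0) {s : ℝ}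
    (hs : s ∈ Set.Icc 0 (π / 2)) :
    f (cos s • x + sin s • y) ≤ max (f x) (f y) := by
  obtain ⟨e, he⟩ := hint
  have hx0 : x ≠ 0 := by rintro rfl; simp at hx
  have hy0 : y ≠ 0 := by rintro rfl; simp at hy
  set u := fun ε : ℝ => ‖x + ε • e‖⁻¹ • (x + ε • e)
  set v := fun ε : ℝ => ‖y + ε • e‖⁻¹ • (y + ε • e)
  have hu : Tendsto u (𝓝[>] 0) (𝓝 x) :=
    (tendsto_inv_norm_smul_add_smul hx e).mono_left nhdsWithin_le_nhds
  have hv : Tendsto v (𝓝[>] 0) (𝓝 y) :=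
    (tendsto_inv_norm_smul_add_smul hy e).mono_left nhdsWithin_le_nhds
  have hρ : ∀ᶠ ε in 𝓝[>] 0, |⟪u ε, v ε⟫_ℝ| < 1 := by
    have h := (hu.inner (𝕜 := ℝ) hv).abs
    rw [hxy, abs_zero] at h
    exact h.eventually_lt_const one_pos
  set t := s / (π / 2)
  have ht : t ∈ Set.Icc (0 : ℝ) 1 :=
    ⟨div_nonneg hs.1 (by positivity), div_le_one_of_le₀ hs.2 (by positivity)⟩
  have hlim := tendsto_geoSeg hu hv (by simp [hxy]) t
  rw [geoSeg_of_inner_eq_zero hxy, div_mul_cancel₀ _ (by positivity)] at hlim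
  refine le_of_tendsto_of_tendsto ((hf.tendsto _).comp hlim)
    (((hf.tendsto _).comp hu).max ((hf.tendsto _).comp hv)) ?_
  filter_upwards [hρ, eventually_inv_norm_smul_add_smul_mem hK hconv hxK hx0 he,
    eventually_inv_norm_smul_add_smul_mem hK hconv hyK hy0 he] with ε hρε huε hvε
  have hgeo := isMinGeodesic_geoSeg (mem_sphere_zero_iff_norm.mp huε.1)
    (mem_sphere_zero_iff_norm.mp hvε.1) hρε
  have h := hq _ huε _ hvε _ hgeo
    (fun _ hr => geoSeg_mem_sphere_inter_interior hK hconv huε hvε hρε hr)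
    0 t 1 le_rfl ht.1 ht.2 le_rfl
  rwa [geoSeg_zero, geoSeg_one hρε] at h

end Sphere

theorem quadratic_sph_quasiconvex_implies_Z_property_general {n : ℕ}
    (K : Set (EuclideanSpace ℝ (Fin n)))
    (hcone : ∀ x ∈ K, ∀ t : ℝ, 0 < t → t • x ∈ K)
    (hconvex : Convex ℝ K)
    (hint : (interior K).Nonempty)
    (hselfdual : K = {x | ∀ y ∈ K, 0 ≤ ⟪x, y⟫_ℝ})
    (A : Matrix (Fin n) (Fin n) ℝ) (hA : A.IsSymm)
    (hq : SphQuasiConvexOn (Metric.sphere 0 1 ∩ interior K)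
      (fun x => ⟪mulVecE A x, x⟫_ℝ)) :
    ∀ x ∈ K, ∀ y ∈ {z | ∀ w ∈ K, 0 ≤ ⟪z, w⟫_ℝ}, ⟪x, y⟫_ℝ = 0 →
      ⟪mulVecE A x, y⟫_ℝ ≤ 0 := by
  intro x hxK y hy hxy
  by_contra! hpos
  have hyK : y ∈ K := by rwa [hselfdual]
  have hx : x ≠ 0 := by rintro rfl; simp [mulVecE_eq_toEuclideanLin] at hpos
  have hy : y ≠ 0 := by rintro rfl; simp at hpos
  set u := ‖x‖⁻¹ • x
  set w := ‖y‖⁻¹ • y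
  have huw : ⟪u, w⟫_ℝ = 0 := by simp [u, w, real_inner_smul_left, real_inner_smul_right, hxy]
  have hb : 0 < ⟪mulVecE A u, w⟫_ℝ := by
    simp only [u, w, mulVecE_eq_toEuclideanLin, map_smul, real_inner_smul_left,
      real_inner_smul_right]
    positivity
  obtain ⟨s, hs, hlt⟩ := exists_max_lt_cos_sq_mul_add (a := ⟪mulVecE A u, u⟫_ℝ)
    (c := ⟪mulVecE A w, w⟫_ℝ) hb
  have hle := hq.apply_cos_smul_add_sin_smul_le_max hcone hconvex hint
    ((continuous_mulVecE A).inner continuous_id') (hcone x hxK _ (by positivity))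
    (hcone y hyK _ (by positivity)) (norm_smul_inv_norm hx) (norm_smul_inv_norm hy) huw hs
  rw [inner_mulVecE_smul_add_smul hA] at hle
  exact hle.not_gt hlt

/-- For a self-dual proper cone `K ⊆ ℝⁿ` and a symmetric matrix `A`, if the quadratic
function `q_A(x) = ⟪Ax, x⟫` is spherically quasi-convex on `C = 𝕊^{n-1} ∩ int K`, then `A`
has the `K`-Z-property: `⟪Ax, y⟫ ≤ 0` whenever `x ∈ K`, `y ∈ K*` and `⟪x, y⟫ = 0`. -/
theorem quadratic_sph_quasiconvex_implies_Z_property {n : ℕ}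
    (K : Set (EuclideanSpace ℝ (Fin n)))
    (hcone : ∀ x ∈ K, ∀ t : ℝ, 0 < t → t • x ∈ K)
    (hclosed : IsClosed K) (hconvex : Convex ℝ K)
    (hpointed : K ∩ (-K) ⊆ {0}) (hint : (interior K).Nonempty)
    (hselfdual : K = {x | ∀ y ∈ K, 0 ≤ ⟪x, y⟫_ℝ})
    (A : Matrix (Fin n) (Fin n) ℝ) (hA : A.IsSymm)
    (hq : SphQuasiConvexOn (Metric.sphere 0 1 ∩ interior K)
      (fun x => ⟪mulVecE A x, x⟫_ℝ)) :
    ∀ x ∈ K, ∀ y ∈ {z | ∀ w ∈ K, 0 ≤ ⟪z, w⟫_ℝ}, ⟪x, y⟫_ℝ = 0 →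
      ⟪mulVecE A x, y⟫_ℝ ≤ 0 :=
  quadratic_sph_quasiconvex_implies_Z_property_general K hcone hconvex hint hselfdual A hA hq
end
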